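/- arXiv:2202.09645 — 13 statements merged into one kernel-verified Lean document; each statement's English description precedes it below -/
import Mathlib

section
/- For every integer m with 2 ≤ m ≤ 5 and every positive integer n, there exists a subgraph G of the complete bipartite graph K_{m,n} such that G contains no copy of K_{2,2} and the bipartite complement of G contains no copy of K_{5,5}. (Consequently the m-bipartite Ramsey number BR_m(K_{2,2}, K_{5,5}) does not exist for m = 2, 3, 4, 5.) -/
/-- A subgraph of the complete bipartite graph `K_{m,n}` is identified with its
edge set, a finset of pairs `(x, y)` with `x` in the part `X = Fin m` and
`y` in the part `Y = Fin n`.  `bContains s t E` says that the bipartite graph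
with edge set `E` contains a copy of `K_{s,t}`: there are `s` distinct
vertices of `X` and `t` distinct vertices of `Y` with all pairs present. -/
def bContains {m n : ℕ} (s t : ℕ) (E : Finset (Fin m × Fin n)) : Prop :=
  ∃ (A : Finset (Fin m)) (B : Finset (Fin n)),
    A.card = s ∧ B.card = t ∧ ∀ x ∈ A, ∀ y ∈ B, (x, y) ∈ E

/-- The bipartite complement: edge set `(X × Y) \ E`. -/
def bCompl {m n : ℕ} (E : Finset (Fin m × Fin n)) : Finset (Fin m × Fin n) :=
  Finset.univ \ E

/-- The neighborhood `N_G(x) ⊆ Y` of a vertex `x ∈ X`. -/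
def bNbhd {m n : ℕ} (E : Finset (Fin m × Fin n)) (x : Fin m) : Finset (Fin n) :=
  Finset.univ.filter (fun y => (x, y) ∈ E)

/-- The degree of a vertex `x ∈ X`. -/
def bDeg {m n : ℕ} (E : Finset (Fin m × Fin n)) (x : Fin m) : ℕ :=
  (bNbhd E x).card

/-- `Δ(G_X)`: the maximum degree over the vertices of the part `X`. -/
def bMaxDegX {m n : ℕ} (E : Finset (Fin m × Fin n)) : ℕ :=
  Finset.univ.sup (fun x => bDeg E x)

theorem stmt_0 (m : ℕ) (hm₁ : 2 ≤ m) (hm₂ : m ≤ 5) (n : ℕ) (hn : 0 < n) :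
    ∃ E : Finset (Fin m × Fin n),
      ¬ bContains 2 2 E ∧ ¬ bContains 5 5 (bCompl E) := by
  have hm0 : 0 < m := by omega
  refine ⟨Finset.univ.filter (fun p => p.1.val = p.2.val % m), ?_, ?_⟩
  · rintro ⟨A, B, hA, hB, hall⟩
    obtain ⟨x1, hx1, x2, hx2, hne⟩ := Finset.one_lt_card.mp (by omega : 1 < A.card)
    obtain ⟨y, hy⟩ := Finset.card_pos.mp (by omega : 0 < B.card)
    have h1 := hall x1 hx1 y hy
    have h2 := hall x2 hx2 y hy
    simp only [Finset.mem_filter] at h1 h2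
    exact hne (Fin.ext (h1.2.trans h2.2.symm))
  · rintro ⟨A, B, hA, hB, hall⟩
    have hAle : A.card ≤ m := le_trans (Finset.card_le_univ A) (by simp)
    have hm5 : m = 5 := by omega
    have hAuniv : A = Finset.univ := Finset.eq_univ_of_card A (by simp [hA, hm5])
    obtain ⟨y, hy⟩ := Finset.card_pos.mp (by omega : 0 < B.card)
    have hx : (⟨y.val % m, Nat.mod_lt _ hm0⟩ : Fin m) ∈ A := hAuniv ▸ Finset.mem_univ _
    have := hall _ hx y hy
    simp [bCompl, Finset.mem_sdiff, Finset.mem_filter] at this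
end

section
/- Let m ≥ 6 and n ≥ 10, and let G be a subgraph of the complete bipartite graph K_{m,n} with parts X (of size m) and Y (of size n). If some vertex of X has degree at least 10 in G, then G contains K_{2,2} or the bipartite complement of G contains K_{5,5}. -/
/-!
If `G` has no `K_{2,2}`, two distinct vertices of `X` have at most one common neighbour. Hence
any `s` vertices of `X` other than `x` are adjacent to at most `s` neighbours of `x`, and the
remaining `deg x - s` neighbours of `x` are adjacent to none of them: together they span a
complete bipartite graph in the complement.
-/

open Finset

variable {m n : ℕ} {E : Finset (Fin m × Fin n)}

theorem mem_bNbhd {x : Fin m} {y : Fin n} : y ∈ bNbhd E x ↔ (x, y) ∈ E := by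
  simp [bNbhd]

theorem mem_bCompl {p : Fin m × Fin n} : p ∈ bCompl E ↔ p ∉ E := by
  simp [bCompl]

theorem bContains_of_le_card {s t : ℕ} (A : Finset (Fin m)) (B : Finset (Fin n))
    (hA : s ≤ #A) (hB : t ≤ #B) (hAB : ∀ x ∈ A, ∀ y ∈ B, (x, y) ∈ E) :
    bContains s t E := by
  obtain ⟨A', hA'A, hA'⟩ := exists_subset_card_eq hA
  obtain ⟨B', hB'B, hB'⟩ := exists_subset_card_eq hB
  exact ⟨A', B', hA', hB', fun x hx y hy => hAB x (hA'A hx) y (hB'B hy)⟩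

theorem card_bNbhd_inter_le_one (h : ¬ bContains 2 2 E) {x x' : Fin m} (hxx' : x ≠ x') :
    #(bNbhd E x ∩ bNbhd E x') ≤ 1 := by
  by_contra! hlt
  obtain ⟨y, hy, y', hy', hyy'⟩ := one_lt_card.mp hlt
  simp only [mem_inter, mem_bNbhd] at hy hy'
  refine h ⟨{x, x'}, {y, y'}, card_pair hxx', card_pair hyy', ?_⟩
  simp only [mem_insert, mem_singleton]
  rintro a (rfl | rfl) b (rfl | rfl) <;> tauto

theorem card_bNbhd_sub_le_card_sdiff_biUnion (h : ¬ bContains 2 2 E) {x : Fin m}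
    {A : Finset (Fin m)} (hxA : x ∉ A) :
    bDeg E x - #A ≤ #(bNbhd E x \ A.biUnion (bNbhd E)) := by
  have hcommon : #(A.biUnion fun a => bNbhd E x ∩ bNbhd E a) ≤ #A :=
    calc #(A.biUnion fun a => bNbhd E x ∩ bNbhd E a)
        ≤ ∑ a ∈ A, #(bNbhd E x ∩ bNbhd E a) := card_biUnion_le
      _ ≤ ∑ _a ∈ A, 1 :=
          sum_le_sum fun a ha => card_bNbhd_inter_le_one h (ne_of_mem_of_not_mem ha hxA).symm
      _ = #A := by simp
  calc bDeg E x - #A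
      ≤ #(bNbhd E x) - #(A.biUnion fun a => bNbhd E x ∩ bNbhd E a) :=
        Nat.sub_le_sub_left hcommon _
    _ ≤ #(bNbhd E x \ A.biUnion fun a => bNbhd E x ∩ bNbhd E a) := le_card_sdiff _ _
    _ = #(bNbhd E x \ A.biUnion (bNbhd E)) := by rw [← inter_biUnion, sdiff_inter_self_left]

theorem bContains_bCompl_of_not_bContains_two_two (h : ¬ bContains 2 2 E) {x : Fin m}
    {s t : ℕ} (hs : s < m) (hst : s + t ≤ bDeg E x) : bContains s t (bCompl E) := by
  obtain ⟨A, hAx, hA⟩ : ∃ A ⊆ univ.erase x, #A = s :=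
    exists_subset_card_eq <| by
      rw [card_erase_of_mem (mem_univ x), card_univ, Fintype.card_fin]; omega
  have hxA : x ∉ A := fun hx => by simpa using hAx hx
  refine bContains_of_le_card A (bNbhd E x \ A.biUnion (bNbhd E)) hA.ge ?_ ?_
  · have := card_bNbhd_sub_le_card_sdiff_biUnion h hxA
    omega
  · intro a ha b hb
    rw [mem_bCompl, ← mem_bNbhd]
    exact fun hab => (mem_sdiff.mp hb).2 (mem_biUnion.mpr ⟨a, ha, hab⟩)

theorem stmt_1_general (m n : ℕ) (hm : 6 ≤ m)
    (E : Finset (Fin m × Fin n)) (x : Fin m) (hx : 10 ≤ bDeg E x) :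
    bContains 2 2 E ∨ bContains 5 5 (bCompl E) :=
  or_iff_not_imp_left.mpr fun h =>
    bContains_bCompl_of_not_bContains_two_two h (by omega) (by omega : 5 + 5 ≤ bDeg E x)

theorem stmt_1 (m n : ℕ) (hm : 6 ≤ m) (hn : 10 ≤ n)
    (E : Finset (Fin m × Fin n)) (x : Fin m) (hx : 10 ≤ bDeg E x) :
    bContains 2 2 E ∨ bContains 5 5 (bCompl E) :=
  stmt_1_general m n hm E x hx
end

section
/- Every subgraph G of the complete bipartite graph K_{6,40} contains a copy of K_{2,2}, or the bipartite complement of G contains a copy of K_{5,5}. (Hence BR_6(K_{2,2}, K_{5,5}) ≤ 40.) -/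
theorem stmt_3 (E : Finset (Fin 6 × Fin 40)) :
    bContains 2 2 E ∨ bContains 5 5 (bCompl E) := by
  classical
  by_cases h : bContains 2 2 E
  · exact Or.inl h
  right
  set N : Fin 40 → Finset (Fin 6) := fun y => Finset.univ.filter (fun x => (x, y) ∈ E) with hN
  -- the choice of a 2-element subset of a big neighborhood
  set f : Fin 40 → Finset (Fin 6) := fun y =>
    if h2 : 2 ≤ (N y).card then (Finset.exists_subset_card_eq h2).choose else ∅ with hf
  have hfspec : ∀ y, 2 ≤ (N y).card → f y ⊆ N y ∧ (f y).card = 2 := by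
    intro y h2
    simp only [hf, dif_pos h2]
    exact (Finset.exists_subset_card_eq h2).choose_spec
  set S : Finset (Fin 40) := Finset.univ.filter (fun y => ¬ (N y).card ≤ 1) with hS
  have hScard : S.card ≤ 15 := by
    have hmaps : ∀ y ∈ S, f y ∈ (Finset.univ : Finset (Fin 6)).powersetCard 2 := by
      intro y hy
      simp only [hS, Finset.mem_filter] at hy
      have h2 : 2 ≤ (N y).card := by omega
      rcases hfspec y h2 with ⟨_, hc⟩
      simp [Finset.mem_powersetCard, hc]
    have hinj : ∀ y1 ∈ S, ∀ y2 ∈ S, f y1 = f y2 → y1 = y2 := by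
      intro y1 hy1 y2 hy2 hfe
      by_contra hne
      simp only [hS, Finset.mem_filter] at hy1 hy2
      have h21 : 2 ≤ (N y1).card := by omega
      have h22 : 2 ≤ (N y2).card := by omega
      rcases hfspec y1 h21 with ⟨hsub1, hc1⟩
      rcases hfspec y2 h22 with ⟨hsub2, _⟩
      apply h
      refine ⟨f y1, {y1, y2}, hc1, ?_, ?_⟩
      · rw [Finset.card_pair hne]
      · intro x hx y hy
        rcases Finset.mem_insert.mp hy with rfl | hy
        · have := hsub1 hx
          simpa [hN] using this
        · rw [Finset.mem_singleton] at hy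
          subst hy
          rw [hfe] at hx
          have := hsub2 hx
          simpa [hN] using this
    calc S.card ≤ ((Finset.univ : Finset (Fin 6)).powersetCard 2).card :=
          Finset.card_le_card_of_injOn f hmaps hinj
      _ = 15 := by rw [Finset.card_powersetCard]; decide
  set T : Finset (Fin 40) := Finset.univ.filter (fun y => (N y).card ≤ 1) with hT
  have hTS : T.card + S.card = 40 := by
    have := Finset.card_filter_add_card_filter_not
      (s := (Finset.univ : Finset (Fin 40))) (p := fun y => (N y).card ≤ 1)
    simpa [hT, hS] using this
  have hTcard : 25 ≤ T.card := by omega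
  -- each y in T has N y ⊆ {x₀} for some x₀
  set g : Fin 6 → Finset (Fin 40) := fun x0 => Finset.univ.filter (fun y => N y ⊆ {x0}) with hg
  have hTsub : T ⊆ Finset.univ.biUnion g := by
    intro y hy
    simp only [hT, Finset.mem_filter] at hy
    rcases Finset.card_le_one_iff_subset_singleton.mp hy.2 with ⟨x0, hx0⟩
    simp only [Finset.mem_biUnion]
    refine ⟨x0, Finset.mem_univ _, ?_⟩
    simp only [hg, Finset.mem_filter]
    exact ⟨Finset.mem_univ _, hx0⟩
  obtain ⟨x0, hx0⟩ : ∃ x0, 5 ≤ (g x0).card := by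
    by_contra hc
    push_neg at hc
    have h1 : T.card ≤ ∑ x0 : Fin 6, (g x0).card :=
      le_trans (Finset.card_le_card hTsub) (Finset.card_biUnion_le)
    have h2 : ∑ x0 : Fin 6, (g x0).card ≤ 6 * 4 := by
      calc ∑ x0 : Fin 6, (g x0).card ≤ ∑ _x0 : Fin 6, 4 :=
            Finset.sum_le_sum (fun i _ => by have := hc i; omega)
        _ = 6 * 4 := by simp
    omega
  obtain ⟨B, hBsub, hBcard⟩ := Finset.exists_subset_card_eq hx0
  refine ⟨Finset.univ.erase x0, B, ?_, hBcard, ?_⟩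
  · rw [Finset.card_erase_of_mem (Finset.mem_univ _), Finset.card_univ]
    decide
  · intro x hx y hy
    have hxne : x ≠ x0 := (Finset.mem_erase.mp hx).1
    have hyg := hBsub hy
    simp only [hg, Finset.mem_filter] at hyg
    simp only [bCompl, Finset.mem_sdiff, Finset.mem_univ, true_and]
    intro hmem
    have hxN : x ∈ N y := by simp [hN, hmem]
    have := hyg.2 hxN
    simp at this
    exact hxne this
end

section
/- The number 40 is the least positive integer n such that every subgraph G of the complete bipartite graph K_{6,n} contains a copy of K_{2,2} or has a copy of K_{5,5} in its bipartite complement; that is, BR_6(K_{2,2}, K_{5,5}) = 40. -/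
open Finset

section ColumnFamilies

variable {α ι : Type*} [Fintype α] [DecidableEq α] (c : ι → Finset α) (s : Finset ι)

theorem card_filter_one_lt_card_le_choose_two
    (hc : ∀ y₁ ∈ s, ∀ y₂ ∈ s, y₁ ≠ y₂ → #(c y₁ ∩ c y₂) ≤ 1) :
    #{y ∈ s | 1 < #(c y)} ≤ (Fintype.card α).choose 2 := by
  have hpair : ∀ y ∈ {y ∈ s | 1 < #(c y)}, ∃ T ⊆ c y, #T = 2 := fun y hy =>
    exists_subset_card_eq (mem_filter.mp hy).2
  choose! T hTsub hTcard using hpair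
  rw [← card_univ, ← card_powersetCard]
  refine card_le_card_of_injOn T (fun y hy => mem_powersetCard.mpr ⟨subset_univ _, hTcard y hy⟩) ?_
  intro y₁ hy₁ y₂ hy₂ hT
  by_contra hne
  have hsub : T y₁ ⊆ c y₁ ∩ c y₂ := subset_inter (hTsub y₁ hy₁) (hT ▸ hTsub y₂ hy₂)
  have := card_le_card hsub
  have := hc y₁ (mem_filter.mp hy₁).1 y₂ (mem_filter.mp hy₂).1 hne
  have := hTcard y₁ hy₁
  omega

theorem exists_lt_card_filter_subset_singleton [DecidableEq ι] [Nonempty α] {t : ℕ}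
    (h : Fintype.card α * t < #{y ∈ s | #(c y) ≤ 1}) :
    ∃ r, t < #{y ∈ s | c y ⊆ {r}} := by
  have hcover : {y ∈ s | #(c y) ≤ 1} ⊆ univ.biUnion fun r => {y ∈ s | c y ⊆ {r}} := by
    intro y hy
    obtain ⟨hys, hy1⟩ := mem_filter.mp hy
    obtain ⟨r, hr⟩ := card_le_one_iff_subset_singleton.mp hy1
    exact mem_biUnion.mpr ⟨r, mem_univ r, mem_filter.mpr ⟨hys, hr⟩⟩
  have hsum : ∑ _r : α, t < ∑ r : α, #{y ∈ s | c y ⊆ {r}} := calc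
    ∑ _r : α, t = Fintype.card α * t := by simp
    _ < #{y ∈ s | #(c y) ≤ 1} := h
    _ ≤ _ := (card_le_card hcover).trans card_biUnion_le
  obtain ⟨r, -, hr⟩ := exists_lt_of_sum_lt hsum
  exact ⟨r, hr⟩

end ColumnFamilies

section ColumnNeighbourhoods

variable {m n : ℕ}

def bNbhdY (E : Finset (Fin m × Fin n)) (y : Fin n) : Finset (Fin m) :=
  univ.filter fun x => (x, y) ∈ E

def ofNbhdY (c : Fin n → Finset (Fin m)) : Finset (Fin m × Fin n) :=
  univ.filter fun p => p.1 ∈ c p.2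

@[simp]
theorem mem_bNbhdY {E : Finset (Fin m × Fin n)} {x : Fin m} {y : Fin n} :
    x ∈ bNbhdY E y ↔ (x, y) ∈ E := by
  simp [bNbhdY]

@[simp]
theorem bNbhdY_ofNbhdY (c : Fin n → Finset (Fin m)) : bNbhdY (ofNbhdY c) = c := by
  ext y x
  simp [ofNbhdY]

theorem bContains_two_two_iff (E : Finset (Fin m × Fin n)) :
    bContains 2 2 E ↔ ∃ y₁ y₂, y₁ ≠ y₂ ∧ 1 < #(bNbhdY E y₁ ∩ bNbhdY E y₂) := by
  constructor
  · rintro ⟨A, B, hA, hB, hE⟩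
    obtain ⟨y₁, y₂, hne, rfl⟩ := card_eq_two.mp hB
    refine ⟨y₁, y₂, hne, ?_⟩
    have hsub : A ⊆ bNbhdY E y₁ ∩ bNbhdY E y₂ := fun x hx => by
      simp [hE x hx]
    have := card_le_card hsub
    omega
  · rintro ⟨y₁, y₂, hne, h⟩
    obtain ⟨A, hsub, hA⟩ := exists_subset_card_eq h
    refine ⟨A, {y₁, y₂}, hA, card_pair hne, fun x hx y hy => ?_⟩
    have hx' := mem_inter.mp (hsub hx)
    rcases mem_insert.mp hy with rfl | hy
    · exact mem_bNbhdY.mp hx'.1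
    · exact mem_singleton.mp hy ▸ mem_bNbhdY.mp hx'.2

theorem bContains_bCompl_iff (s t : ℕ) (E : Finset (Fin m × Fin n)) :
    bContains s t (bCompl E) ↔
      ∃ A : Finset (Fin m), #A = s ∧ t ≤ #{y | Disjoint A (bNbhdY E y)} := by
  simp only [bContains, bCompl, mem_sdiff, mem_univ, true_and]
  constructor
  · rintro ⟨A, B, hA, rfl, hE⟩
    refine ⟨A, hA, card_le_card fun y hy => ?_⟩
    simpa [disjoint_left] using fun x hx => hE x hx y hy
  · rintro ⟨A, hA, ht⟩
    obtain ⟨B, hsub, hB⟩ := exists_subset_card_eq ht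
    refine ⟨A, B, hA, hB, fun x hx y hy => ?_⟩
    have := (mem_filter.mp (hsub hy)).2
    simpa using disjoint_left.mp this hx

end ColumnNeighbourhoods

theorem bContains_two_two_or_bCompl {m n t : ℕ} (hn : (m + 1).choose 2 + (m + 1) * t < n)
    (E : Finset (Fin (m + 1) × Fin n)) : bContains 2 2 E ∨ bContains m (t + 1) (bCompl E) := by
  rw [or_iff_not_imp_left, bContains_two_two_iff, bContains_bCompl_iff]
  push Not
  intro hc
  have hpairs := card_filter_one_lt_card_le_choose_two (bNbhdY E) univ fun y₁ _ y₂ _ => hc y₁ y₂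
  have hsplit := card_filter_add_card_filter_not (s := univ) fun y => 1 < #(bNbhdY E y)
  simp only [card_univ, Fintype.card_fin, not_lt] at hsplit hpairs
  obtain ⟨r, hr⟩ := exists_lt_card_filter_subset_singleton (bNbhdY E) univ (t := t)
    (by rw [Fintype.card_fin]; omega)
  refine ⟨{r}ᶜ, by simp [card_compl], hr.trans_le (card_le_card fun y => ?_)⟩
  simp [disjoint_compl_left_iff]

-- One column for every pair of rows, and `t` private columns for every row.
abbrev ExtremalCol (m t : ℕ) := {p : Finset (Fin m) // #p = 2} ⊕ Fin m × Fin t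

namespace ExtremalCol

variable {m t : ℕ}

def nbhd : ExtremalCol m t → Finset (Fin m)
  | .inl p => p
  | .inr (r, _) => {r}

theorem card_eq : Fintype.card (ExtremalCol m t) = m.choose 2 + m * t := by
  simp [Fintype.card_finset_len]

theorem nbhd_nonempty : ∀ a : ExtremalCol m t, (nbhd a).Nonempty
  | .inl ⟨p, hp⟩ => card_pos.mp (by simp [nbhd, hp])
  | .inr (r, _) => singleton_nonempty r

theorem card_inter_nbhd_le_one : ∀ {a b : ExtremalCol m t}, a ≠ b → #(nbhd a ∩ nbhd b) ≤ 1
  | .inl ⟨p, hp⟩, .inl ⟨q, hq⟩, hne => by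
    by_contra! h
    have hpq : p ∩ q = p := eq_of_subset_of_card_le inter_subset_left (by simp [nbhd] at h; omega)
    have hqp : p ∩ q = q := eq_of_subset_of_card_le inter_subset_right (by simp [nbhd] at h; omega)
    exact hne (congrArg Sum.inl (Subtype.ext (hpq.symm.trans hqp)))
  | a, .inr (r, _), _ => (card_le_card inter_subset_right).trans (card_singleton r).le
  | .inr (r, _), b, _ => (card_le_card inter_subset_left).trans (card_singleton r).le

theorem card_filter_nbhd_eq_singleton (r : Fin m) : #{a : ExtremalCol m t | nbhd a = {r}} = t := by
  have : ({a | nbhd a = {r}} : Finset (ExtremalCol m t)) =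
      univ.map ((Function.Embedding.sectR r (Fin t)).trans Function.Embedding.inr) := by
    ext (⟨p, hp⟩ | ⟨r', i⟩)
    · rw [mem_filter]
      simpa [nbhd] using ne_of_apply_ne Finset.card (by simp [hp])
    · simp [nbhd, eq_comm]
  simp [this]

end ExtremalCol

theorem exists_not_bContains_two_two_and_not_bCompl {m n t : ℕ}
    (hn : n ≤ (m + 1).choose 2 + (m + 1) * t) :
    ∃ E : Finset (Fin (m + 1) × Fin n), ¬bContains 2 2 E ∧ ¬bContains m (t + 1) (bCompl E) := by
  open ExtremalCol in
  let e : Fin n ↪ ExtremalCol (m + 1) t :=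
    (Fin.castLEEmb (by rwa [card_eq])).trans (Fintype.equivFin _).symm.toEmbedding
  refine ⟨ofNbhdY fun y => nbhd (e y), ?_, ?_⟩
  · rw [bContains_two_two_iff, bNbhdY_ofNbhdY]
    rintro ⟨y₁, y₂, hne, h⟩
    exact (card_inter_nbhd_le_one (e.injective.ne hne)).not_gt h
  · rw [bContains_bCompl_iff, bNbhdY_ofNbhdY]
    rintro ⟨A, hA, ht⟩
    obtain ⟨r, hr⟩ : ∃ r, Aᶜ = {r} := card_eq_one.mp (by simp [card_compl, hA])
    have hmaps : ∀ y ∈ ({y | Disjoint A (nbhd (e y))} : Finset (Fin n)), nbhd (e y) = {r} := by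
      intro y hy
      rw [← (nbhd_nonempty _).subset_singleton_iff, ← hr, subset_compl_iff_disjoint_left]
      exact (mem_filter.mp hy).2
    have : #{y | Disjoint A (nbhd (e y))} ≤ t := calc
      _ ≤ #{a | nbhd a = {r}} :=
        card_le_card_of_injOn e (fun y hy => by simpa using hmaps y hy) e.injective.injOn
      _ = t := card_filter_nbhd_eq_singleton r
    omega

theorem isLeast_bipartiteRamsey_two_two (m t : ℕ) :
    IsLeast {n : ℕ | 0 < n ∧ ∀ E : Finset (Fin (m + 1) × Fin n),
      bContains 2 2 E ∨ bContains m (t + 1) (bCompl E)} ((m + 1).choose 2 + (m + 1) * t + 1) := by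
  refine ⟨⟨Nat.succ_pos _, bContains_two_two_or_bCompl (Nat.lt_succ_self _)⟩, ?_⟩
  rintro n ⟨-, hn⟩
  by_contra! hlt
  obtain ⟨E, h22, hcompl⟩ := exists_not_bContains_two_two_and_not_bCompl (Nat.le_of_lt_succ hlt)
  exact (hn E).elim h22 hcompl

theorem stmt_4 :
    IsLeast {n : ℕ | 0 < n ∧ ∀ E : Finset (Fin 6 × Fin n),
      bContains 2 2 E ∨ bContains 5 5 (bCompl E)} 40 :=
  isLeast_bipartiteRamsey_two_two 5 4
end

section
/- Every subgraph G of the complete bipartite graph K_{8,30} contains a copy of K_{2,2}, or the bipartite complement of G contains a copy of K_{5,5}. (Hence BR_8(K_{2,2}, K_{5,5}) ≤ 30.) -/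
open Finset

def bCol {m n : ℕ} (E : Finset (Fin m × Fin n)) (y : Fin n) : Finset (Fin m) :=
  univ.filter fun x => (x, y) ∈ E

section Families

variable {ι α : Type*} [Fintype ι] [Fintype α]

theorem sum_choose_two_card_le [DecidableEq α] (F : ι → Finset α)
    (hF : ∀ i j, i ≠ j → #(F i ∩ F j) ≤ 1) :
    ∑ i, (#(F i)).choose 2 ≤ (Fintype.card α).choose 2 := by
  have hdisj : ((univ : Finset ι) : Set ι).PairwiseDisjoint fun i => (F i).powersetCard 2 := by
    intro i _ j _ hij
    refine disjoint_left.2 fun p hpi hpj => ?_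
    rw [mem_powersetCard] at hpi hpj
    have := card_le_card (subset_inter hpi.1 hpj.1)
    have := hF i j hij
    omega
  calc ∑ i, (#(F i)).choose 2 = #(univ.biUnion fun i => (F i).powersetCard 2) := by
        simp only [card_biUnion hdisj, card_powersetCard]
    _ ≤ #((univ : Finset α).powersetCard 2) :=
        card_le_card (biUnion_subset.2 fun i _ => powersetCard_mono (subset_univ _))
    _ = (Fintype.card α).choose 2 := by rw [card_powersetCard, card_univ]

theorem sum_comp_card_eq (F : ι → Finset α) (G : ℕ → ℕ) :
    ∑ i, G #(F i) = ∑ j ∈ range (Fintype.card α + 1), #{i | #(F i) = j} * G j := by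
  rw [← sum_fiberwise_of_maps_to (g := fun i => #(F i))
    fun i _ => mem_range_succ_iff.2 (card_le_univ _)]
  refine sum_congr rfl fun j _ => ?_
  rw [sum_congr rfl fun i hi => by rw [(mem_filter.1 hi).2], sum_const, smul_eq_mul]

end Families

section Columns

variable {m n : ℕ} {E : Finset (Fin m × Fin n)}

theorem card_bCol_inter_le_one (h : ¬ bContains 2 2 E) {y y' : Fin n} (hyy' : y ≠ y') :
    #(bCol E y ∩ bCol E y') ≤ 1 := by
  by_contra! hlt
  obtain ⟨A, hA, hAcard⟩ := exists_subset_card_eq hlt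
  refine h ⟨A, {y, y'}, hAcard, card_pair hyy', fun x hx w hw => ?_⟩
  have hx := hA hx
  simp only [bCol, mem_inter, mem_filter, mem_univ, true_and] at hx
  rcases mem_insert.1 hw with rfl | hw
  · exact hx.1
  · exact mem_singleton.1 hw ▸ hx.2

theorem card_filter_bCol_subset_lt {s t : ℕ} (h : ¬ bContains s t (bCompl E))
    {B : Finset (Fin m)} (hB : #B + s = m) : #{y | bCol E y ⊆ B} < t := by
  by_contra! hle
  obtain ⟨T, hT, hTcard⟩ := exists_subset_card_eq hle
  refine h ⟨Bᶜ, T, by rw [card_compl, Fintype.card_fin]; omega, hTcard, fun x hx y hy => ?_⟩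
  have hyB := (mem_filter.1 (hT hy)).2
  simp only [bCompl, mem_sdiff, mem_univ, true_and]
  exact fun hxy => mem_compl.1 hx (hyB (by simpa [bCol] using hxy))

theorem sum_choose_card_bCol_le {s t k : ℕ} (h : ¬ bContains s t (bCompl E)) (hk : k + s = m) :
    ∑ y, (if #(bCol E y) ≤ k then (m - #(bCol E y)).choose (k - #(bCol E y)) else 0)
      ≤ m.choose k * (t - 1) := by
  calc _ ≤ ∑ y, #{B ∈ powersetCard k univ | bCol E y ⊆ B} := sum_le_sum fun y _ => by
          split_ifs with hy
          · rw [card_filter_powersetCard_subset _ _ _ (subset_univ _) hy, card_univ,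
              Fintype.card_fin]
          · exact Nat.zero_le _
    _ = ∑ B ∈ powersetCard k univ, #{y | bCol E y ⊆ B} := by
        simp only [card_filter]
        exact sum_comm
    _ ≤ ∑ _B ∈ powersetCard k univ, (t - 1) := sum_le_sum fun B hB =>
        Nat.le_pred_of_lt (card_filter_bCol_subset_lt h (by rw [(mem_powersetCard.1 hB).2, hk]))
    _ = m.choose k * (t - 1) := by simp

theorem sum_choose_two_card_bCol_le (h : ¬ bContains 2 2 E) :
    ∑ y, (#(bCol E y)).choose 2 ≤ m.choose 2 := by
  simpa using sum_choose_two_card_le (bCol E) fun _ _ => card_bCol_inter_le_one h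

theorem choose_two_le_card_filter_bCol_subset (h : ¬ bContains 2 2 E)
    (hcard : #{y | #(bCol E y) = 2} = m.choose 2) (B : Finset (Fin m)) :
    (#B).choose 2 ≤ #{y | #(bCol E y) = 2 ∧ bCol E y ⊆ B} := by
  have hinj : Set.InjOn (bCol E) {y | #(bCol E y) = 2} := fun y hy y' _ hyy' => by
    by_contra hne
    have := card_bCol_inter_le_one h hne
    rw [hyy', inter_self] at this
    simp_all
  have himage : ({y | #(bCol E y) = 2} : Finset (Fin n)).image (bCol E)
      = (univ : Finset (Fin m)).powersetCard 2 := by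
    refine eq_of_subset_of_card_le (fun p hp => ?_) ?_
    · obtain ⟨y, hy, rfl⟩ := mem_image.1 hp
      exact mem_powersetCard.2 ⟨subset_univ _, (mem_filter.1 hy).2⟩
    · rw [card_image_of_injOn (by simpa using hinj), hcard, card_powersetCard, card_univ,
        Fintype.card_fin]
  rw [← card_powersetCard]
  refine card_le_card_of_surjOn (bCol E) fun p hp => ?_
  rw [mem_coe, mem_powersetCard] at hp
  obtain ⟨y, hy, rfl⟩ := mem_image.1 (himage ▸ mem_powersetCard.2 ⟨subset_univ p, hp.2⟩)
  exact ⟨y, by simpa [hp.1] using hy, rfl⟩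

end Columns

theorem card_bCol_profile {E : Finset (Fin 8 × Fin 30)} (h22 : ¬ bContains 2 2 E)
    (h55 : ¬ bContains 5 5 (bCompl E)) :
    #{y | #(bCol E y) = 1} = 2 ∧ #{y | #(bCol E y) = 2} = 28 := by
  have triples := sum_choose_card_bCol_le (k := 3) h55 rfl
  have pairs := sum_choose_two_card_bCol_le h22
  have total := sum_comp_card_eq (bCol E) fun _ => 1
  rw [sum_comp_card_eq (bCol E)
    (fun j => if j ≤ 3 then (8 - j).choose (3 - j) else 0)] at triples
  rw [sum_comp_card_eq (bCol E) (fun j => j.choose 2)] at pairs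
  norm_num [sum_range_succ, Nat.choose] at triples pairs total
  -- triples + 15 * pairs - 21 * total reads 35 n₀ + 25 n₃ + 69 (n₄ + ⋯ + n₈) ≤ 14, where nⱼ
  -- counts the columns of size j; so n₁ + n₂ = 30, and then n₂ ≤ 28 and 21 n₁ + 6 n₂ ≤ 224.
  grind

theorem stmt_7 (E : Finset (Fin 8 × Fin 30)) :
    bContains 2 2 E ∨ bContains 5 5 (bCompl E) := by
  refine or_iff_not_and_not.2 fun ⟨h22, h55⟩ => ?_
  obtain ⟨hS1, hS2⟩ := card_bCol_profile h22 h55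
  set S1 : Finset (Fin 30) := {y | #(bCol E y) = 1}
  obtain ⟨B, hS1B, hB⟩ := exists_superset_card_eq (s := S1.biUnion (bCol E)) (n := 3)
    ((card_biUnion_le_card_mul _ _ 1 fun y hy => (mem_filter.1 hy).2.le).trans (by omega))
    (by simp)
  have hpairs : 3 ≤ #{y | #(bCol E y) = 2 ∧ bCol E y ⊆ B} := by
    simpa [hB] using choose_two_le_card_filter_bCol_subset h22 hS2 B
  have hdisj : Disjoint S1 ({y | #(bCol E y) = 2 ∧ bCol E y ⊆ B} : Finset (Fin 30)) :=
    disjoint_filter.2 fun y _ h1 h2 => by omega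
  have hfive : #S1 + #{y | #(bCol E y) = 2 ∧ bCol E y ⊆ B} ≤ #{y | bCol E y ⊆ B} := by
    rw [← card_union_of_disjoint hdisj]
    refine card_le_card (union_subset (fun y hy => ?_) (monotone_filter_right _ fun _ _ h => h.2))
    exact mem_filter.2 ⟨mem_univ _, (subset_biUnion_of_mem (bCol E) hy).trans hS1B⟩
  have := card_filter_bCol_subset_lt (B := B) h55 (by rw [hB])
  omega
end

section
/- Let G be a subgraph of the complete bipartite graph K_{6,40} with parts X (of size 6) and Y (of size 40) such that G contains no copy of K_{2,2}. If the maximum degree over the vertices of X equals 8, then the bipartite complement of G contains a copy of K_{5,5}. -/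
theorem stmt_9 (E : Finset (Fin 6 × Fin 40))
    (hK : ¬ bContains 2 2 E) (hΔ : bMaxDegX E = 8) :
    bContains 5 5 (bCompl E) := by
  classical
  by_contra hc
  -- for each x0, the set of y whose neighborhood is contained in {x0}
  set T : Fin 6 → Finset (Fin 40) :=
    fun x0 => Finset.univ.filter (fun y => ∀ x, x ≠ x0 → (x, y) ∉ E) with hTdef
  have hT4 : ∀ x0, (T x0).card ≤ 4 := by
    intro x0
    by_contra h
    push_neg at h
    obtain ⟨B, hBsub, hBcard⟩ := Finset.exists_subset_card_eq (Nat.succ_le_of_lt h)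
    apply hc
    refine ⟨Finset.univ.erase x0, B, ?_, hBcard, ?_⟩
    · simp [Finset.card_erase_of_mem]
    · intro x hx y hy
      have hxne : x ≠ x0 := (Finset.mem_erase.mp hx).1
      have hyT := hBsub hy
      rw [hTdef] at hyT
      simp only [Finset.mem_filter, Finset.mem_univ, true_and] at hyT
      simp [bCompl, hyT x hxne]
  -- degree of y in the other direction
  set d : Fin 40 → ℕ := fun y => (Finset.univ.filter (fun x => (x, y) ∈ E)).card with hddef
  set cnt : Fin 40 → ℕ :=
    fun y => (Finset.univ.filter (fun x0 : Fin 6 => ∀ x, x ≠ x0 → (x, y) ∉ E)).card with hcdef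
  -- double counting
  have hswap : ∑ x0 : Fin 6, (T x0).card = ∑ y : Fin 40, cnt y := by
    simp only [hTdef, hcdef, Finset.card_filter]
    exact Finset.sum_comm
  have hdsum : ∑ y : Fin 40, d y ≤ 48 := by
    have h1 : ∑ y : Fin 40, d y = ∑ x : Fin 6, bDeg E x := by
      simp only [hddef, bDeg, bNbhd, Finset.card_filter]
      exact Finset.sum_comm
    rw [h1]
    calc ∑ x : Fin 6, bDeg E x ≤ ∑ _x : Fin 6, 8 := by
          refine Finset.sum_le_sum ?_
          intro x _
          rw [← hΔ]
          exact Finset.le_sup (Finset.mem_univ x)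
      _ = 48 := by simp
  -- pointwise: cnt y + d y ≥ 2
  have hkey : ∀ y : Fin 40, 2 ≤ cnt y + d y := by
    intro y
    rcases Nat.lt_or_ge (d y) 2 with hd | hd
    · interval_cases hdy : d y
      · -- d y = 0 : no neighbors, cnt = 6
        have hN : (Finset.univ.filter (fun x => (x, y) ∈ E)) = ∅ :=
          Finset.card_eq_zero.mp hdy
        have : cnt y = 6 := by
          simp only [hcdef]
          have : (Finset.univ.filter (fun x0 : Fin 6 => ∀ x, x ≠ x0 → (x, y) ∉ E))
              = Finset.univ := by
            refine Finset.filter_true_of_mem ?_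
            intro x0 _ x _ hxE
            have : x ∈ Finset.univ.filter (fun x => (x, y) ∈ E) := by
              simp [hxE]
            simp [hN] at this
          rw [this]; simp
        omega
      · -- d y = 1 : unique neighbor x1; x1 is in the cnt-filter
        obtain ⟨x1, hx1⟩ := Finset.card_eq_one.mp hdy
        have hmem : x1 ∈ Finset.univ.filter (fun x0 : Fin 6 => ∀ x, x ≠ x0 → (x, y) ∉ E) := by
          simp only [Finset.mem_filter, Finset.mem_univ, true_and]
          intro x hxne hxE
          have : x ∈ Finset.univ.filter (fun x => (x, y) ∈ E) := by simp [hxE]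
          rw [hx1] at this
          exact hxne (Finset.mem_singleton.mp this)
        have : 1 ≤ cnt y := by
          simp only [hcdef]
          exact Finset.card_pos.mpr ⟨x1, hmem⟩
        omega
    · omega
  -- sum it up
  have h80 : (80 : ℕ) ≤ ∑ y : Fin 40, (cnt y + d y) := by
    calc (80 : ℕ) = ∑ _y : Fin 40, 2 := by simp
      _ ≤ ∑ y : Fin 40, (cnt y + d y) := Finset.sum_le_sum (fun y _ => hkey y)
  rw [Finset.sum_add_distrib] at h80
  have h24 : ∑ x0 : Fin 6, (T x0).card ≤ 24 := by
    calc ∑ x0 : Fin 6, (T x0).card ≤ ∑ _x0 : Fin 6, 4 :=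
          Finset.sum_le_sum (fun x0 _ => hT4 x0)
      _ = 24 := by simp
  rw [hswap] at h24
  omega
end

section
/- Let G be a subgraph of the complete bipartite graph K_{6,40} with parts X (of size 6) and Y (of size 40) such that G contains no copy of K_{2,2}, and suppose Δ(G_X) = 9 and x₁ ∈ X is a vertex of degree 9. If some vertex x ∈ X \ {x₁} has no neighbor in N_G(x₁), or if two distinct vertices x, x' ∈ X \ {x₁} have a common neighbor lying in N_G(x₁), then the bipartite complement of G contains a copy of K_{5,5}. -/
/-! In a `K_{2,2}`-free bipartite graph two distinct vertices of `Y` have at most one common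
neighbour, so the vertices of `Y` of degree at least two contain pairwise distinct pairs of `X`:
there are at most `C(6,2) = 15` of them. Hence at least `25` vertices of `Y` have at most one
neighbour, and by pigeonhole five of them have all their neighbours in a single `{x}`. Those five
and `X \ {x}` span a `K_{5,5}` in the bipartite complement. -/

open Finset

def bColNbhd {m n : ℕ} (E : Finset (Fin m × Fin n)) (y : Fin n) : Finset (Fin m) :=
  univ.filter (fun x => (x, y) ∈ E)

section

variable {m n : ℕ} (E : Finset (Fin m × Fin n))

theorem eq_of_subset_bColNbhd_of_not_bContains (hK : ¬ bContains 2 2 E) {t : Finset (Fin m)}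
    (ht : #t = 2) {y y' : Fin n} (hy : t ⊆ bColNbhd E y) (hy' : t ⊆ bColNbhd E y') :
    y = y' := by
  by_contra hne
  refine hK ⟨t, {y, y'}, ht, card_pair hne, fun x hx b hb => ?_⟩
  rcases mem_insert.1 hb with rfl | hb
  · exact (mem_filter.1 (hy hx)).2
  · rw [mem_singleton.1 hb]
    exact (mem_filter.1 (hy' hx)).2

theorem card_two_le_card_bColNbhd_le_choose (hK : ¬ bContains 2 2 E) :
    #{y | 2 ≤ #(bColNbhd E y)} ≤ m.choose 2 := by
  have hpair : ∀ y ∈ ({y | 2 ≤ #(bColNbhd E y)} : Finset (Fin n)),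
      ∃ t ⊆ bColNbhd E y, #t = 2 :=
    fun y hy => exists_subset_card_eq (mem_filter.1 hy).2
  choose! g hg_sub hg_card using hpair
  calc _ ≤ #(univ.powersetCard 2 : Finset (Finset (Fin m))) :=
        card_le_card_of_injOn g
          (fun y hy => mem_powersetCard.2 ⟨subset_univ _, hg_card y hy⟩)
          (fun y hy y' hy' hg => eq_of_subset_bColNbhd_of_not_bContains E hK (hg_card y hy)
            (hg_sub y hy) (hg ▸ hg_sub y' hy'))
    _ = m.choose 2 := by simp

theorem bContains_bCompl_of_card_bColNbhd_le_one [NeZero m] {s : ℕ} (T : Finset (Fin n))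
    (hT : ∀ y ∈ T, #(bColNbhd E y) ≤ 1) (hcard : m * s < #T) :
    bContains (m - 1) (s + 1) (bCompl E) := by
  have hsingle : ∀ y ∈ T, ∃ x, bColNbhd E y ⊆ {x} :=
    fun y hy => card_le_one_iff_subset_singleton.1 (hT y hy)
  choose! f hf using hsingle
  obtain ⟨x, -, hx⟩ := exists_lt_card_fiber_of_mul_lt_card_of_maps_to (t := univ) (f := f)
    (fun _ _ => mem_univ _) (by simpa using hcard)
  obtain ⟨B, hB_sub, hB_card⟩ := exists_subset_card_eq hx
  refine ⟨univ.erase x, B, by simp, hB_card, fun a ha y hy => ?_⟩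
  obtain ⟨hyT, rfl⟩ := mem_filter.1 (hB_sub hy)
  refine mem_sdiff.2 ⟨mem_univ _, fun hE => (mem_erase.1 ha).1 ?_⟩
  exact mem_singleton.1 (hf y hyT (mem_filter.2 ⟨mem_univ _, hE⟩))

theorem bContains_bCompl_of_not_bContains_two_two_s10 [NeZero m] {s : ℕ}
    (hK : ¬ bContains 2 2 E) (hmn : m * s + m.choose 2 < n) :
    bContains (m - 1) (s + 1) (bCompl E) := by
  refine bContains_bCompl_of_card_bColNbhd_le_one E {y | ¬ 2 ≤ #(bColNbhd E y)}
    (fun y hy => by have := (mem_filter.1 hy).2; omega) ?_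
  have hsplit := card_filter_add_card_filter_not (s := (univ : Finset (Fin n)))
    (fun y => 2 ≤ #(bColNbhd E y))
  have hhigh := card_two_le_card_bColNbhd_le_choose E hK
  rw [card_univ, Fintype.card_fin] at hsplit
  omega

end

theorem stmt_10_general (E : Finset (Fin 6 × Fin 40))
    (hK : ¬ bContains 2 2 E) :
    bContains 5 5 (bCompl E) :=
  bContains_bCompl_of_not_bContains_two_two_s10 (s := 4) E hK (by decide)

theorem stmt_10 (E : Finset (Fin 6 × Fin 40))
    (hK : ¬ bContains 2 2 E) (hΔ : bMaxDegX E = 9)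
    (x₁ : Fin 6) (hx₁ : bDeg E x₁ = 9)
    (h : (∃ x : Fin 6, x ≠ x₁ ∧ bNbhd E x ∩ bNbhd E x₁ = ∅) ∨
         (∃ x x' : Fin 6, x ≠ x' ∧ x ≠ x₁ ∧ x' ≠ x₁ ∧
            ∃ y : Fin 40, y ∈ bNbhd E x₁ ∧ y ∈ bNbhd E x ∧ y ∈ bNbhd E x')) :
    bContains 5 5 (bCompl E) :=
  stmt_10_general E hK
end

section
/- Let G be a subgraph of the complete bipartite graph K_{7,30} with parts X (of size 7) and Y (of size 30) such that G contains no copy of K_{2,2}. If every vertex of X has degree at most 6 in G, then the bipartite complement of G contains a copy of K_{5,5}. -/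
/-!
Call a vertex `y ∈ Y` covered by `(p, q) ∈ X × X` if `N(y) ⊆ {p, q}`. If five vertices of `Y` are
covered by the same pair, they are non-adjacent in `G` to all five vertices of `X \ {p, q}`, which
gives the `K_{5,5}` in the complement. To find such a pair, count covering pairs with weights:
`y` is covered by `49`, `13` or `2` ordered pairs according as `deg y = 0, 1, 2`, and in each case
this is at least `24 - 11 deg y`. Since `G` has at most `42` edges, the `49` pairs cover at least
`30 · 24 - 11 · 42 = 258 > 4 · 49` vertices in total.
-/

open Finset

section CoveringPairs

variable {α : Type*} [Fintype α] [DecidableEq α]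

def coveringPairs (N : Finset α) : Finset (α × α) :=
  univ.filter fun z => N ⊆ {z.1, z.2}

lemma coveringPairs_empty : coveringPairs (∅ : Finset α) = univ := by
  simp [coveringPairs]

lemma card_coveringPairs_singleton (a : α) :
    #(coveringPairs {a}) = 2 * Fintype.card α - 1 := by
  have hunion : coveringPairs {a} = ({a} ×ˢ univ) ∪ (univ ×ˢ {a}) := by
    ext ⟨p, q⟩
    simp [coveringPairs, eq_comm]
  have hinter : ({a} ×ˢ univ) ∩ (univ ×ˢ {a}) = {(a, a)} := by
    ext ⟨p, q⟩
    simp [eq_comm]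
  have := card_union_add_card_inter ({a} ×ˢ (univ : Finset α)) (univ ×ˢ {a})
  rw [← hunion, hinter] at this
  simp only [card_product, card_singleton, card_univ] at this
  omega

lemma two_le_card_coveringPairs {N : Finset α} (hN : #N = 2) : 2 ≤ #(coveringPairs N) := by
  obtain ⟨a, b, hab, rfl⟩ := card_eq_two.mp hN
  refine one_lt_card.mpr ⟨(a, b), ?_, (b, a), ?_, by simp [hab]⟩ <;>
    simp [coveringPairs, insert_subset_iff]

lemma le_card_coveringPairs_add (hα : Fintype.card α = 7) (N : Finset α) :
    24 ≤ #(coveringPairs N) + 11 * #N := by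
  obtain h0 | h1 | h2 | _ : #N = 0 ∨ #N = 1 ∨ #N = 2 ∨ 3 ≤ #N := by omega
  · rw [card_eq_zero.mp h0, coveringPairs_empty, card_univ, Fintype.card_prod, hα]
    omega
  · obtain ⟨a, rfl⟩ := card_eq_one.mp h1
    rw [card_coveringPairs_singleton, hα]
    omega
  · have := two_le_card_coveringPairs h2
    omega
  · omega

end CoveringPairs

section Bipartite

variable {m n : ℕ}

def coveredBy (E : Finset (Fin m × Fin n)) (p q : Fin m) : Finset (Fin n) :=
  univ.filter fun y => bNbhdY E y ⊆ {p, q}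

lemma sum_card_bNbhdY_eq_sum_bDeg (E : Finset (Fin m × Fin n)) :
    ∑ y, #(bNbhdY E y) = ∑ x, bDeg E x := by
  simp only [bNbhdY, bDeg, bNbhd, card_filter]
  exact sum_comm

lemma sum_card_coveredBy_eq_sum_card_coveringPairs (E : Finset (Fin m × Fin n)) :
    ∑ z : Fin m × Fin m, #(coveredBy E z.1 z.2) = ∑ y, #(coveringPairs (bNbhdY E y)) := by
  simp only [coveredBy, coveringPairs, card_filter]
  exact sum_comm

lemma bContains_bCompl_of_le_card_coveredBy {E : Finset (Fin m × Fin n)} {s t : ℕ} (p q : Fin m)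
    (hs : s + 2 ≤ m) (ht : t ≤ #(coveredBy E p q)) : bContains s t (bCompl E) := by
  have hrest : s ≤ #({p, q}ᶜ : Finset (Fin m)) := by
    rw [card_compl, Fintype.card_fin]
    have := card_le_two (a := p) (b := q)
    omega
  obtain ⟨A, hA, hAcard⟩ := exists_subset_card_eq hrest
  obtain ⟨B, hB, hBcard⟩ := exists_subset_card_eq ht
  refine ⟨A, B, hAcard, hBcard, fun x hx y hy => mem_sdiff.mpr ⟨mem_univ _, fun hxy => ?_⟩⟩
  have hxN : x ∈ bNbhdY E y := by simpa [bNbhdY] using hxy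
  exact (mem_compl.mp (hA hx)) ((mem_filter.mp (hB hy)).2 hxN)

end Bipartite

theorem stmt_12_general (E : Finset (Fin 7 × Fin 30))
    (hdeg : ∀ x : Fin 7, bDeg E x ≤ 6) :
    bContains 5 5 (bCompl E) := by
  have hedges : ∑ y, #(bNbhdY E y) ≤ 42 := by
    rw [sum_card_bNbhdY_eq_sum_bDeg]
    simpa using sum_le_sum fun x (_ : x ∈ univ) => hdeg x
  have hweights : ∑ _y : Fin 30, 24 ≤ ∑ y, (#(coveringPairs (bNbhdY E y)) + 11 * #(bNbhdY E y)) :=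
    sum_le_sum fun y _ => le_card_coveringPairs_add (Fintype.card_fin 7) _
  obtain ⟨⟨p, q⟩, -, hpq⟩ : ∃ z ∈ (univ : Finset (Fin 7 × Fin 7)), 4 < #(coveredBy E z.1 z.2) := by
    refine exists_lt_of_sum_lt ?_
    rw [sum_card_coveredBy_eq_sum_card_coveringPairs]
    simp only [sum_add_distrib, ← mul_sum, sum_const, card_univ, Fintype.card_fin,
      Fintype.card_prod, smul_eq_mul] at hweights ⊢
    omega
  exact bContains_bCompl_of_le_card_coveredBy p q (by norm_num) hpq

theorem stmt_12 (E : Finset (Fin 7 × Fin 30))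
    (hK : ¬ bContains 2 2 E) (hdeg : ∀ x : Fin 7, bDeg E x ≤ 6) :
    bContains 5 5 (bCompl E) :=
  stmt_12_general E hdeg
end

section
/- Let G be a subgraph of the complete bipartite graph K_{7,30} with parts X (of size 7) and Y (of size 30) such that G contains no copy of K_{2,2}. If the maximum degree over the vertices of X equals 8, then the bipartite complement of G contains a copy of K_{5,5}. -/
theorem stmt_14 (E : Finset (Fin 7 × Fin 30))
    (hK : ¬ bContains 2 2 E) (hΔ : bMaxDegX E = 8) :
    bContains 5 5 (bCompl E) := by
  classical
  have no22 : ∀ x1 x2 : Fin 7, ∀ y1 y2 : Fin 30, x1 ≠ x2 → y1 ≠ y2 →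
      (x1, y1) ∈ E → (x1, y2) ∈ E → (x2, y1) ∈ E → (x2, y2) ∈ E → False := by
    intro x1 x2 y1 y2 hx hy h11 h12 h21 h22
    apply hK
    refine ⟨{x1, x2}, {y1, y2}, ?_, ?_, ?_⟩
    · rw [Finset.card_insert_of_notMem (by simp [hx]), Finset.card_singleton]
    · rw [Finset.card_insert_of_notMem (by simp [hy]), Finset.card_singleton]
    · intro x hxm y hym
      rcases Finset.mem_insert.1 hxm with rfl | hxm <;>
        rcases Finset.mem_insert.1 hym with rfl | hym <;> simp_all
  obtain ⟨x0, -, hx0⟩ :=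
    Finset.exists_mem_eq_sup (Finset.univ : Finset (Fin 7)) ⟨0, Finset.mem_univ 0⟩
      (fun x => bDeg E x)
  have hdeg : bDeg E x0 = 8 := by rw [← hx0]; exact hΔ
  set N : Finset (Fin 30) := bNbhd E x0 with hNdef
  have hNcard : N.card = 8 := hdeg
  have hNmem : ∀ y : Fin 30, y ∈ N ↔ (x0, y) ∈ E := by
    intro y; simp [hNdef, bNbhd]
  set X' : Finset (Fin 7) := Finset.univ.erase x0 with hX'def
  have hX'card : X'.card = 6 := by
    rw [hX'def, Finset.card_erase_of_mem (Finset.mem_univ x0)]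
    simp
  set Y' : Finset (Fin 30) := Finset.univ \ N with hY'def
  have hY'card : Y'.card = 22 := by
    rw [hY'def, Finset.card_sdiff_of_subset (Finset.subset_univ N), hNcard]
    simp
  -- each x ≠ x0 has at most one neighbor in N
  have capN : ∀ x ∈ X', (N.filter (fun w => (x, w) ∈ E)).card ≤ 1 := by
    intro x hx
    by_contra h
    obtain ⟨a, ha, b, hb, hab⟩ := Finset.one_lt_card.1 (lt_of_not_ge h)
    obtain ⟨haN, haE⟩ := Finset.mem_filter.1 ha
    obtain ⟨hbN, hbE⟩ := Finset.mem_filter.1 hb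
    exact no22 x x0 a b (Finset.ne_of_mem_erase hx) hab haE hbE
      ((hNmem a).1 haN) ((hNmem b).1 hbN)
  -- at most 15 vertices of Y' have ≥ 2 neighbors in X'
  set nb : Fin 30 → Finset (Fin 7) := fun y => X'.filter (fun x => (x, y) ∈ E) with hnbdef
  set S : Finset (Fin 30) := Y'.filter (fun y => 2 ≤ (nb y).card) with hSdef
  have hScard : S.card ≤ 15 := by
    have h15 : (X'.powersetCard 2).card = 15 := by
      rw [Finset.card_powersetCard, hX'card]
      decide
    rw [← h15]
    apply Finset.card_le_card_of_injOn
      (fun y => if h : 2 ≤ (nb y).card then (Finset.exists_subset_card_eq h).choose else ∅)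
    · intro y hy
      have h2 : 2 ≤ (nb y).card := (Finset.mem_filter.1 hy).2
      have hch := (Finset.exists_subset_card_eq h2).choose_spec
      simp only [dif_pos h2]
      exact Finset.mem_powersetCard.2
        ⟨hch.1.trans (Finset.filter_subset _ _), hch.2⟩
    · intro y1 hy1 y2 hy2 heq
      by_contra hne
      have h1 : 2 ≤ (nb y1).card := (Finset.mem_filter.1 hy1).2
      have h2 : 2 ≤ (nb y2).card := (Finset.mem_filter.1 hy2).2
      have hch1 := (Finset.exists_subset_card_eq h1).choose_spec
      have hch2 := (Finset.exists_subset_card_eq h2).choose_spec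
      simp only [dif_pos h1, dif_pos h2] at heq
      obtain ⟨a, b, hab, ht⟩ := Finset.card_eq_two.1 hch1.2
      have ha1 : a ∈ nb y1 := hch1.1 (by rw [ht]; simp)
      have hb1 : b ∈ nb y1 := hch1.1 (by rw [ht]; simp)
      have ha2 : a ∈ nb y2 := hch2.1 (by rw [← heq, ht]; simp)
      have hb2 : b ∈ nb y2 := hch2.1 (by rw [← heq, ht]; simp)
      exact no22 a b y1 y2 hab hne (Finset.mem_filter.1 ha1).2
        (Finset.mem_filter.1 ha2).2 (Finset.mem_filter.1 hb1).2
        (Finset.mem_filter.1 hb2).2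
  -- so at least 7 vertices of Y' have ≤ 1 neighbor in X'
  set L : Finset (Fin 30) := Y'.filter (fun y => (nb y).card ≤ 1) with hLdef
  have hLcard : 7 ≤ L.card := by
    have hsplit := Finset.card_filter_add_card_filter_not
      (s := Y') (p := fun y => 2 ≤ (nb y).card)
    have hL : Y'.filter (fun y => ¬ 2 ≤ (nb y).card) = L := by
      apply Finset.filter_congr
      intro y hy
      simp [Nat.lt_succ_iff, Nat.not_le]
    rw [hL, hY'card, ← hSdef] at hsplit
    omega
  -- pick a point of X'
  have hX'ne : X'.Nonempty := Finset.card_pos.1 (by rw [hX'card]; norm_num)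
  obtain ⟨c0, hc0⟩ := hX'ne
  set g : Fin 30 → Fin 7 := fun y => if h : (nb y).Nonempty then h.choose else c0 with hgdef
  have hgval : ∀ y, g y = if h : (nb y).Nonempty then h.choose else c0 := fun y => rfl
  have hgmem : ∀ y : Fin 30, g y ∈ X' := by
    intro y
    rw [hgval]
    split
    · next h => exact Finset.filter_subset _ _ h.choose_spec
    · exact hc0
  have hguniq : ∀ y ∈ L, ∀ x ∈ X', (x, y) ∈ E → x = g y := by
    intro y hy x hx hE
    have hxnb : x ∈ nb y := Finset.mem_filter.2 ⟨hx, hE⟩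
    have hne : (nb y).Nonempty := ⟨x, hxnb⟩
    have hcard : (nb y).card ≤ 1 := (Finset.mem_filter.1 hy).2
    have : g y = hne.choose := by rw [hgval, dif_pos hne]
    rw [this]
    exact Finset.card_le_one.1 hcard x hxnb _ hne.choose_spec
  -- pigeonhole: two vertices of L with the same g-value
  obtain ⟨y1, hy1, y2, hy2, hy12, hgy⟩ :=
    Finset.exists_ne_map_eq_of_card_lt_of_maps_to
      (by rw [hX'card]; omega : X'.card < L.card) (fun y _ => hgmem y)
  set c : Fin 7 := g y1 with hcdef
  set A : Finset (Fin 7) := X'.erase c with hAdef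
  have hAcard : A.card = 5 := by
    rw [hAdef, Finset.card_erase_of_mem (by rw [hcdef]; exact hgmem y1), hX'card]
  have hAX' : A ⊆ X' := Finset.erase_subset _ _
  -- the N-neighbors of A
  set U : Finset (Fin 30) := A.biUnion (fun x => N.filter (fun w => (x, w) ∈ E)) with hUdef
  have hUcard : U.card ≤ 5 := by
    calc U.card ≤ ∑ x ∈ A, (N.filter (fun w => (x, w) ∈ E)).card :=
          Finset.card_biUnion_le
    _ ≤ ∑ _x ∈ A, 1 := Finset.sum_le_sum (fun x hx => capN x (hAX' hx))
    _ = 5 := by rw [Finset.sum_const, hAcard]; simp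
  have hUN : U ⊆ N := by
    rw [hUdef]
    exact Finset.biUnion_subset.2 (fun x _ => Finset.filter_subset _ _)
  have hNU : 3 ≤ (N \ U).card := by
    rw [Finset.card_sdiff_of_subset hUN, hNcard]
    omega
  obtain ⟨W, hWsub, hWcard⟩ := Finset.exists_subset_card_eq hNU
  have hy1N : y1 ∉ N := (Finset.mem_sdiff.1 (Finset.mem_filter.1 hy1).1).2
  have hy2N : y2 ∉ N := (Finset.mem_sdiff.1 (Finset.mem_filter.1 hy2).1).2
  have hy1W : y1 ∉ W := fun h => hy1N (Finset.mem_sdiff.1 (hWsub h)).1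
  have hy2W : y2 ∉ W := fun h => hy2N (Finset.mem_sdiff.1 (hWsub h)).1
  set B : Finset (Fin 30) := insert y1 (insert y2 W) with hBdef
  have hBcard : B.card = 5 := by
    rw [hBdef, Finset.card_insert_of_notMem (by simp [hy12, hy1W]),
      Finset.card_insert_of_notMem hy2W, hWcard]
  refine ⟨A, B, hAcard, hBcard, ?_⟩
  intro x hx y hy
  have hxX' : x ∈ X' := hAX' hx
  have hxc : x ≠ c := Finset.ne_of_mem_erase hx
  have hnotE : (x, y) ∉ E := by
    rw [hBdef] at hy
    rcases Finset.mem_insert.1 hy with rfl | hy'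
    · intro hE
      exact hxc (hguniq y hy1 x hxX' hE)
    · rcases Finset.mem_insert.1 hy' with rfl | hyW
      · intro hE
        have hx2 := hguniq y hy2 x hxX' hE
        exact hxc (hx2.trans hgy.symm)
      · intro hE
        have hyNU := Finset.mem_sdiff.1 (hWsub hyW)
        exact hyNU.2 (Finset.mem_biUnion.2
          ⟨x, hx, Finset.mem_filter.2 ⟨hyNU.1, hE⟩⟩)
  exact Finset.mem_sdiff.2 ⟨Finset.mem_univ _, hnotE⟩
end

section
/- Let G be a subgraph of the complete bipartite graph K_{7,30} with parts X (of size 7) and Y (of size 30) such that G contains no copy of K_{2,2} and Δ(G_X) = 7, and let B = {x ∈ X : deg_G(x) = 7}. If |B| = 1, then the bipartite complement of G contains a copy of K_{5,5}. -/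
open Finset

lemma pair_bound {E : Finset (Fin 7 × Fin 30)} (hK : ¬ bContains 2 2 E)
    {x x' : Fin 7} (hxx : x ≠ x') {y y' : Fin 30} (hyy : y ≠ y')
    (h1 : (x, y) ∈ E) (h2 : (x, y') ∈ E) (h3 : (x', y) ∈ E) (h4 : (x', y') ∈ E) : False := by
  apply hK
  refine ⟨{x, x'}, {y, y'}, ?_, ?_, ?_⟩
  · rw [card_insert_of_notMem (by simpa using hxx), card_singleton]
  · rw [card_insert_of_notMem (by simpa using hyy), card_singleton]
  · intro a ha b hb
    simp only [mem_insert, mem_singleton] at ha hb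
    rcases ha with rfl | rfl <;> rcases hb with rfl | rfl <;> assumption

theorem stmt_15 (E : Finset (Fin 7 × Fin 30))
    (hK : ¬ bContains 2 2 E) (hΔ : bMaxDegX E = 7)
    (hB : (Finset.univ.filter (fun x : Fin 7 => bDeg E x = 7)).card = 1) :
    bContains 5 5 (bCompl E) := by
  classical
  obtain ⟨x0, hx0⟩ := Finset.card_eq_one.mp hB
  have hx0deg : bDeg E x0 = 7 := by
    have h : x0 ∈ Finset.univ.filter (fun x : Fin 7 => bDeg E x = 7) := by
      rw [hx0]; exact mem_singleton_self x0
    simpa using h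
  have hdeg : ∀ x : Fin 7, x ≠ x0 → bDeg E x ≤ 6 := by
    intro x hx
    have h7 : bDeg E x ≤ 7 := by
      have := Finset.le_sup (f := fun x => bDeg E x) (mem_univ x)
      rw [← bMaxDegX, hΔ] at this
      exact this
    have hne : bDeg E x ≠ 7 := by
      intro h
      have : x ∈ Finset.univ.filter (fun x : Fin 7 => bDeg E x = 7) := by
        simp [h]
      rw [hx0, mem_singleton] at this
      exact hx this
    omega
  set X' : Finset (Fin 7) := Finset.univ.erase x0 with hX'
  have hX'card : X'.card = 6 := by
    rw [hX', card_erase_of_mem (mem_univ x0)]; simp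
  set D : Fin 30 → ℕ := fun y => (X'.filter (fun x => (x, y) ∈ E)).card with hDdef
  -- total restricted degree
  have hsumD : ∑ y : Fin 30, D y ≤ 36 := by
    have h1 : ∑ y : Fin 30, D y = ∑ x ∈ X', bDeg E x := by
      simp only [hDdef, card_filter, bDeg, bNbhd]
      rw [Finset.sum_comm]
    rw [h1]
    calc ∑ x ∈ X', bDeg E x ≤ ∑ x ∈ X', 6 := by
          refine sum_le_sum fun x hx => hdeg x ?_
          rw [hX', mem_erase] at hx; exact hx.1
      _ = 36 := by rw [sum_const, hX'card]; simp
  set T1 : Finset (Fin 30) := Finset.univ.filter (fun y => D y = 1) with hT1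
  set T2 : Finset (Fin 30) := Finset.univ.filter (fun y => 2 ≤ D y) with hT2
  have hdisj : Disjoint T1 T2 := by
    rw [Finset.disjoint_left]
    intro y hy1 hy2
    rw [hT1, mem_filter] at hy1
    rw [hT2, mem_filter] at hy2
    omega
  have ht12 : T1.card + 2 * T2.card ≤ 36 := by
    have hsub : T1 ∪ T2 ⊆ Finset.univ := subset_univ _
    have h1 : ∑ y ∈ T1 ∪ T2, D y ≤ ∑ y : Fin 30, D y :=
      sum_le_sum_of_subset hsub
    rw [sum_union hdisj] at h1
    have h2 : ∑ y ∈ T1, D y = T1.card := by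
      rw [card_eq_sum_ones]
      refine sum_congr rfl fun y hy => ?_
      rw [hT1, mem_filter] at hy; exact hy.2
    have h3 : 2 * T2.card ≤ ∑ y ∈ T2, D y := by
      have : ∑ y ∈ T2, 2 ≤ ∑ y ∈ T2, D y := by
        refine sum_le_sum fun y hy => ?_
        rw [hT2, mem_filter] at hy; exact hy.2
      rw [sum_const, smul_eq_mul, mul_comm] at this
      exact this
    omega
  -- some y has restricted degree 0
  have hC : T1.card + T2.card ≤ 29 := by
    by_contra hcon
    push_neg at hcon
    have hall : ∀ y : Fin 30, 1 ≤ D y := by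
      intro y
      by_contra hy
      push_neg at hy
      have h0 : D y = 0 := by omega
      have hyn : y ∉ T1 ∪ T2 := by
        rw [mem_union, hT1, hT2, mem_filter, mem_filter]
        simp [h0]
      have hss : T1 ∪ T2 ⊂ univ :=
        (Finset.ssubset_iff_of_subset (subset_univ _)).mpr ⟨y, mem_univ y, hyn⟩
      have hlt := card_lt_card hss
      rw [card_union_of_disjoint hdisj] at hlt
      simp only [card_univ, Fintype.card_fin] at hlt
      omega
    have hne : ∀ y : Fin 30, ∃ x, x ∈ X' ∧ (x, y) ∈ E := by
      intro y
      obtain ⟨x, hx⟩ := card_pos.mp (hall y)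
      rw [mem_filter] at hx
      exact ⟨x, hx.1, hx.2⟩
    choose f hf1 hf2 using hne
    have hmaps : ∀ y ∈ bNbhd E x0, f y ∈ X' := fun y _ => hf1 y
    have hlt : X'.card < (bNbhd E x0).card := by
      rw [hX'card]
      show 6 < bDeg E x0
      omega
    obtain ⟨y, hy, y', hy', hyy, hfy⟩ :=
      Finset.exists_ne_map_eq_of_card_lt_of_maps_to hlt hmaps
    have hfyx0 : f y ≠ x0 := by
      have := hf1 y; rw [hX', mem_erase] at this; exact this.1
    rw [bNbhd, mem_filter] at hy hy'
    exact pair_bound hK hfyx0 hyy (hf2 y) (hfy ▸ hf2 y') hy.2 hy'.2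
  -- n v and the averaging
  set n : Fin 7 → ℕ := fun v => (T1.filter (fun y => (v, y) ∈ E)).card with hndef
  have hsumn : ∑ v ∈ X', n v = T1.card := by
    simp only [hndef, card_filter]
    rw [Finset.sum_comm, card_eq_sum_ones]
    refine sum_congr rfl fun y hy => ?_
    have hy1 : D y = 1 := by rw [hT1, mem_filter] at hy; exact hy.2
    rw [← card_filter]
    exact hy1
  have hex : ∃ v ∈ X', T1.card ≤ 6 * n v := by
    by_contra hcon
    push_neg at hcon
    have : ∑ v ∈ X', 6 * n v + 6 ≤ ∑ v ∈ X', T1.card := by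
      have := sum_le_sum (s := X') (fun v hv => Nat.succ_le_of_lt (hcon v hv))
      calc ∑ v ∈ X', 6 * n v + 6 = ∑ v ∈ X', (6 * n v + 1) := by
            rw [sum_add_distrib, sum_const, hX'card]; ring
        _ ≤ ∑ v ∈ X', T1.card := this
    rw [← mul_sum, hsumn, sum_const, hX'card, smul_eq_mul] at this
    omega
  obtain ⟨v, hvX', hv6⟩ := hex
  set A : Finset (Fin 7) := X'.erase v with hA
  have hAcard : A.card = 5 := by rw [hA, card_erase_of_mem hvX', hX'card]
  set U : Finset (Fin 30) := Finset.univ.filter (fun y => ∀ x ∈ A, (x, y) ∉ E) with hU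
  set C : Finset (Fin 30) := Finset.univ.filter (fun y => ∃ x ∈ A, (x, y) ∈ E) with hC2
  have hUC : U.card + C.card = 30 := by
    have : U = Cᶜ := by
      rw [hU, hC2, compl_filter]
      refine filter_congr fun y _ => ?_
      push_neg
      rfl
    rw [this, card_compl]
    have : C.card ≤ 30 := by simpa using card_le_card (subset_univ C)
    simp only [Fintype.card_fin]
    omega
  set Nv : Finset (Fin 30) := T1.filter (fun y => (v, y) ∈ E) with hNv
  have hNvsub : Nv ⊆ T1 := filter_subset _ _
  have hCsub : C ⊆ (T1 \ Nv) ∪ T2 := by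
    intro y hy
    rw [hC2, mem_filter] at hy
    obtain ⟨-, x, hxA, hxE⟩ := hy
    have hxX' : x ∈ X' := mem_of_mem_erase hxA
    have hxv : x ≠ v := ne_of_mem_erase hxA
    have hD1 : 1 ≤ D y := by
      rw [hDdef]
      exact card_pos.mpr ⟨x, mem_filter.mpr ⟨hxX', hxE⟩⟩
    rcases Nat.lt_or_ge (D y) 2 with h2 | h2
    · have hDy : D y = 1 := by omega
      have hyT1 : y ∈ T1 := by rw [hT1, mem_filter]; exact ⟨mem_univ y, hDy⟩
      refine mem_union_left _ (mem_sdiff.mpr ⟨hyT1, ?_⟩)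
      intro hyNv
      rw [hNv, mem_filter] at hyNv
      have hvE := hyNv.2
      have : 2 ≤ D y := by
        rw [hDdef]
        have h1 : {x, v} ⊆ X'.filter (fun x => (x, y) ∈ E) := by
          intro a ha
          simp only [mem_insert, mem_singleton] at ha
          rcases ha with rfl | rfl
          · exact mem_filter.mpr ⟨hxX', hxE⟩
          · exact mem_filter.mpr ⟨hvX', hvE⟩
        have h2 : ({x, v} : Finset (Fin 7)).card = 2 := by
          rw [card_insert_of_notMem (by simpa using hxv), card_singleton]
        calc 2 = ({x, v} : Finset (Fin 7)).card := h2.symm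
          _ ≤ _ := card_le_card h1
      omega
    · exact mem_union_right _ (by rw [hT2, mem_filter]; exact ⟨mem_univ y, h2⟩)
  have hnv : n v = Nv.card := rfl
  have hnvle : Nv.card ≤ T1.card := card_le_card hNvsub
  have hCcard : C.card ≤ (T1.card - Nv.card) + T2.card := by
    calc C.card ≤ ((T1 \ Nv) ∪ T2).card := card_le_card hCsub
      _ ≤ (T1 \ Nv).card + T2.card := card_union_le _ _
      _ = (T1.card - Nv.card) + T2.card := by rw [card_sdiff_of_subset hNvsub]
  have hU5 : 5 ≤ U.card := by
    rw [hnv] at hv6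
    omega
  obtain ⟨B', hB'sub, hB'card⟩ := Finset.exists_subset_card_eq hU5
  refine ⟨A, B', hAcard, hB'card, ?_⟩
  intro x hx y hy
  have hyU := hB'sub hy
  rw [hU, mem_filter] at hyU
  rw [bCompl, mem_sdiff]
  exact ⟨mem_univ _, hyU.2 x hx⟩
end

section
/- Let G be a subgraph of the complete bipartite graph K_{7,30} with parts X (of size 7) and Y (of size 30) such that G contains no copy of K_{2,2} and Δ(G_X) = 7, and let B = {x ∈ X : deg_G(x) = 7}. If there exist two distinct vertices x, x' ∈ B whose neighborhoods in Y are disjoint, then the bipartite complement of G contains a copy of K_{5,5}. -/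
lemma common_le_one {m n : ℕ} {E : Finset (Fin m × Fin n)}
    (hK : ¬ bContains 2 2 E) {a b : Fin m} (hab : a ≠ b) :
    (bNbhd E a ∩ bNbhd E b).card ≤ 1 := by
  by_contra hle
  push_neg at hle
  obtain ⟨y1, hy1, y2, hy2, hyne⟩ := Finset.one_lt_card.mp hle
  apply hK
  refine ⟨{a, b}, {y1, y2}, Finset.card_pair hab, Finset.card_pair hyne, ?_⟩
  intro u hu v hv
  simp only [Finset.mem_insert, Finset.mem_singleton] at hu hv
  simp only [bNbhd, Finset.mem_inter, Finset.mem_filter, Finset.mem_univ, true_and] at hy1 hy2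
  rcases hu with rfl | rfl <;> rcases hv with rfl | rfl <;> tauto

lemma build {m n : ℕ} {E : Finset (Fin m × Fin n)} {A : Finset (Fin m)} {W : Finset (Fin n)}
    (hA : A.card = 5) (hW : 5 ≤ W.card)
    (h : ∀ z ∈ A, ∀ y ∈ W, (z, y) ∉ E) :
    bContains 5 5 (bCompl E) := by
  obtain ⟨B, hBW, hB⟩ := Finset.exists_subset_card_eq hW
  refine ⟨A, B, hA, hB, fun z hz y hy => ?_⟩
  simp only [bCompl, Finset.mem_sdiff, Finset.mem_univ, true_and]
  exact h z hz y (hBW hy)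

theorem stmt_16 (E : Finset (Fin 7 × Fin 30))
    (hK : ¬ bContains 2 2 E) (hΔ : bMaxDegX E = 7)
    (h : ∃ x x' : Fin 7, x ≠ x' ∧ bDeg E x = 7 ∧ bDeg E x' = 7 ∧
      bNbhd E x ∩ bNbhd E x' = ∅) :
    bContains 5 5 (bCompl E) := by
  classical
  obtain ⟨x, x', hne, hdx, hdx', hdisj⟩ := h
  set N : Fin 7 → Finset (Fin 30) := bNbhd E with hN
  have hmemN : ∀ z y, y ∈ N z ↔ (z, y) ∈ E := by
    intro z y; simp [hN, bNbhd]
  set S : Finset (Fin 30) := N x ∪ N x' with hS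
  set T : Finset (Fin 30) := Finset.univ \ S with hT
  set A : Finset (Fin 7) := Finset.univ \ {x, x'} with hA
  have hAcard : A.card = 5 := by
    rw [hA, Finset.card_sdiff_of_subset (Finset.subset_univ _)]
    rw [Finset.card_pair hne]
    simp
  have hx'A : x' ∉ A := by simp [hA]
  have hAx : ∀ z ∈ A, z ≠ x ∧ z ≠ x' := by
    intro z hz
    simp only [hA, Finset.mem_sdiff, Finset.mem_univ, true_and, Finset.mem_insert,
      Finset.mem_singleton] at hz
    tauto
  have hcom : ∀ {a b : Fin 7}, a ≠ b → (N a ∩ N b).card ≤ 1 :=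
    fun hab => common_le_one hK hab
  have hTnE : ∀ {y}, y ∈ T → (x, y) ∉ E ∧ (x', y) ∉ E := by
    intro y hy
    simp only [hT, hS, Finset.mem_sdiff, Finset.mem_univ, true_and, Finset.mem_union,
      hmemN] at hy
    tauto
  set excl : Fin 7 → Finset (Fin 30) :=
    fun i => T.filter (fun y => (i, y) ∈ E ∧ ∀ z ∈ A, (z, y) ∈ E → z = i) with hexcl
  by_cases hcase : ∃ i ∈ A, 2 ≤ (excl i).card
  · -- Case A : swap some z for x'
    obtain ⟨i, hiA, hi2⟩ := hcase
    set A' : Finset (Fin 7) := insert x' (A.erase i) with hA'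
    have hx'e : x' ∉ A.erase i := fun hmem => hx'A (Finset.mem_of_mem_erase hmem)
    have hA'card : A'.card = 5 := by
      rw [hA', Finset.card_insert_of_notMem hx'e, Finset.card_erase_of_mem hiA, hAcard]
    set B0 : Finset (Fin 30) := (N x).filter (fun y => ∀ z ∈ A', (z, y) ∉ E) with hB0
    have hB0card : 3 ≤ B0.card := by
      have hsplit := Finset.card_filter_add_card_filter_not
        (s := N x) (p := fun y => ∀ z ∈ A', (z, y) ∉ E)
      rw [← hB0] at hsplit
      have hCsub : (N x).filter (fun y => ¬ ∀ z ∈ A', (z, y) ∉ E) ⊆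
          A'.biUnion (fun z => N z ∩ N x) := by
        intro y hy
        simp only [Finset.mem_filter] at hy
        push_neg at hy
        obtain ⟨hyNx, z, hz, hzy⟩ := hy
        exact Finset.mem_biUnion.mpr ⟨z, hz, Finset.mem_inter.mpr ⟨(hmemN z y).mpr hzy, hyNx⟩⟩
      have hCcard : ((N x).filter (fun y => ¬ ∀ z ∈ A', (z, y) ∉ E)).card ≤ 4 := by
        refine le_trans (Finset.card_le_card hCsub) (le_trans (Finset.card_biUnion_le) ?_)
        rw [hA', Finset.sum_insert hx'e]
        have h1 : (N x' ∩ N x).card = 0 := by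
          rw [Finset.inter_comm]
          simp [hdisj]
        have h2 : ∀ z ∈ A.erase i, (N z ∩ N x).card ≤ 1 := by
          intro z hz
          exact hcom (hAx z (Finset.mem_of_mem_erase hz)).1
        calc (N x' ∩ N x).card + ∑ z ∈ A.erase i, (N z ∩ N x).card
            ≤ 0 + ∑ z ∈ A.erase i, 1 := by
              exact Nat.add_le_add (le_of_eq h1) (Finset.sum_le_sum h2)
          _ = (A.erase i).card := by simp
          _ = 4 := by rw [Finset.card_erase_of_mem hiA, hAcard]
      have hNx7 : (N x).card = 7 := hdx
      omega
    have hdisjB : Disjoint (excl i) B0 := by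
      rw [Finset.disjoint_left]
      intro y hy hy'
      simp only [hexcl, Finset.mem_filter] at hy
      have hyT := hy.1
      simp only [hB0, Finset.mem_filter] at hy'
      have : y ∈ S := by
        rw [hS]
        exact Finset.mem_union_left _ hy'.1
      simp only [hT, Finset.mem_sdiff] at hyT
      exact hyT.2 this
    refine build hA'card (W := excl i ∪ B0) ?_ ?_
    · rw [Finset.card_union_of_disjoint hdisjB]
      omega
    · intro z hz y hy
      rcases Finset.mem_union.mp hy with hy | hy
      · simp only [hexcl, Finset.mem_filter] at hy
        obtain ⟨hyT, hyi, hyuniq⟩ := hy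
        rcases Finset.mem_insert.mp hz with rfl | hz
        · exact (hTnE hyT).2
        · intro hzy
          have := hyuniq z (Finset.mem_of_mem_erase hz) hzy
          exact (Finset.ne_of_mem_erase hz) this
      · simp only [hB0, Finset.mem_filter] at hy
        exact hy.2 z hz
  · -- Case B : A itself works
    push_neg at hcase
    set covered : Finset (Fin 30) := Finset.univ.filter (fun y => ∃ z ∈ A, (z, y) ∈ E)
      with hcovered
    set uncov : Finset (Fin 30) := Finset.univ.filter (fun y => ¬ ∃ z ∈ A, (z, y) ∈ E)
      with huncov
    have hsplit := Finset.card_filter_add_card_filter_not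
      (s := (Finset.univ : Finset (Fin 30))) (p := fun y => ∃ z ∈ A, (z, y) ∈ E)
    -- bound covered by 25
    set covS : Finset (Fin 30) := A.biUnion (fun z => N z ∩ S) with hcovS
    set ones : Finset (Fin 30) := A.biUnion excl with hones
    set manys : Finset (Fin 30) :=
      T.filter (fun y => ∃ z ∈ A, ∃ z' ∈ A, z ≠ z' ∧ (z, y) ∈ E ∧ (z', y) ∈ E) with hmanys
    have hcovSub : covered ⊆ covS ∪ (ones ∪ manys) := by
      intro y hy
      simp only [hcovered, Finset.mem_filter, Finset.mem_univ, true_and] at hy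
      obtain ⟨z, hzA, hzy⟩ := hy
      by_cases hyS : y ∈ S
      · exact Finset.mem_union_left _
          (Finset.mem_biUnion.mpr ⟨z, hzA, Finset.mem_inter.mpr ⟨(hmemN z y).mpr hzy, hyS⟩⟩)
      · have hyT : y ∈ T := by
          rw [hT]; exact Finset.mem_sdiff.mpr ⟨Finset.mem_univ y, hyS⟩
        refine Finset.mem_union_right _ ?_
        by_cases hdup : ∃ z' ∈ A, z' ≠ z ∧ (z', y) ∈ E
        · obtain ⟨z', hz'A, hz'ne, hz'y⟩ := hdup
          refine Finset.mem_union_right _ ?_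
          simp only [hmanys, Finset.mem_filter]
          exact ⟨hyT, z, hzA, z', hz'A, hz'ne.symm, hzy, hz'y⟩
        · push_neg at hdup
          refine Finset.mem_union_left _ ?_
          refine Finset.mem_biUnion.mpr ⟨z, hzA, ?_⟩
          simp only [hexcl, Finset.mem_filter]
          refine ⟨hyT, hzy, ?_⟩
          intro w hwA hwy
          by_contra hwz
          exact absurd hwy (hdup w hwA hwz)
    have hcovScard : covS.card ≤ 10 := by
      refine le_trans Finset.card_biUnion_le ?_
      have hper : ∀ z ∈ A, (N z ∩ S).card ≤ 2 := by
        intro z hz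
        obtain ⟨hzx, hzx'⟩ := hAx z hz
        have hdistrib : N z ∩ S = (N z ∩ N x) ∪ (N z ∩ N x') := by
          rw [hS, Finset.inter_union_distrib_left]
        rw [hdistrib]
        refine le_trans (Finset.card_union_le _ _) ?_
        have h1 := hcom hzx
        have h2 := hcom hzx'
        omega
      calc ∑ z ∈ A, (N z ∩ S).card ≤ ∑ z ∈ A, 2 := Finset.sum_le_sum hper
        _ = 10 := by rw [Finset.sum_const, hAcard]; rfl
    have honescard : ones.card ≤ 5 := by
      refine le_trans Finset.card_biUnion_le ?_
      calc ∑ i ∈ A, (excl i).card ≤ ∑ i ∈ A, 1 := by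
            refine Finset.sum_le_sum ?_
            intro i hi
            have := hcase i hi
            omega
        _ = 5 := by rw [Finset.sum_const, hAcard]; simp
    set P : Finset (Fin 7 × Fin 7) := A.offDiag.filter (fun p => p.1 < p.2) with hP
    have hPcard : P.card ≤ 10 := by
      set Q : Finset (Fin 7 × Fin 7) := A.offDiag.filter (fun p => p.2 < p.1) with hQ
      have hPQ : P.card = Q.card := by
        apply Finset.card_bij (fun p _ => p.swap)
        · intro p hp
          simp only [hP, hQ, Finset.mem_filter, Finset.mem_offDiag, Prod.fst_swap,
            Prod.snd_swap] at hp ⊢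
          exact ⟨⟨hp.1.2.1, hp.1.1, hp.1.2.2.symm⟩, hp.2⟩
        · intro p hp q hq hpq
          exact Prod.swap_injective hpq
        · intro q hq
          refine ⟨q.swap, ?_, by simp⟩
          simp only [hP, hQ, Finset.mem_filter, Finset.mem_offDiag, Prod.fst_swap,
            Prod.snd_swap] at hq ⊢
          exact ⟨⟨hq.1.2.1, hq.1.1, hq.1.2.2.symm⟩, hq.2⟩
      have hdisjPQ : Disjoint P Q := by
        rw [Finset.disjoint_left]
        intro p hp hq
        simp only [hP, hQ, Finset.mem_filter] at hp hq
        exact absurd hq.2 (not_lt.mpr (le_of_lt hp.2))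
      have hsub : P ∪ Q ⊆ A.offDiag :=
        Finset.union_subset (Finset.filter_subset _ _) (Finset.filter_subset _ _)
      have hpq2 : P.card + Q.card ≤ A.offDiag.card := by
        rw [← Finset.card_union_of_disjoint hdisjPQ]
        exact Finset.card_le_card hsub
      have hod : A.offDiag.card = 20 := by rw [Finset.offDiag_card, hAcard]
      omega
    have hmanysub : manys ⊆ P.biUnion (fun p => N p.1 ∩ N p.2) := by
      intro y hy
      simp only [hmanys, Finset.mem_filter] at hy
      obtain ⟨hyT, z, hzA, z', hz'A, hnzz, hzy, hz'y⟩ := hy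
      rcases lt_or_gt_of_ne hnzz with hlt | hgt
      · refine Finset.mem_biUnion.mpr ⟨(z, z'), ?_, ?_⟩
        · simp only [hP, Finset.mem_filter, Finset.mem_offDiag]
          exact ⟨⟨hzA, hz'A, hnzz⟩, hlt⟩
        · exact Finset.mem_inter.mpr ⟨(hmemN _ _).mpr hzy, (hmemN _ _).mpr hz'y⟩
      · refine Finset.mem_biUnion.mpr ⟨(z', z), ?_, ?_⟩
        · simp only [hP, Finset.mem_filter, Finset.mem_offDiag]
          exact ⟨⟨hz'A, hzA, hnzz.symm⟩, hgt⟩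
        · exact Finset.mem_inter.mpr ⟨(hmemN _ _).mpr hz'y, (hmemN _ _).mpr hzy⟩
    have hmanyscard : manys.card ≤ 10 := by
      refine le_trans (Finset.card_le_card hmanysub) (le_trans Finset.card_biUnion_le ?_)
      calc ∑ p ∈ P, (N p.1 ∩ N p.2).card ≤ ∑ p ∈ P, 1 := by
            refine Finset.sum_le_sum ?_
            intro p hp
            simp only [hP, Finset.mem_filter, Finset.mem_offDiag] at hp
            exact hcom hp.1.2.2
        _ = P.card := by simp
        _ ≤ 10 := hPcard
    have hcovcard : covered.card ≤ 25 := by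
      refine le_trans (Finset.card_le_card hcovSub) ?_
      refine le_trans (Finset.card_union_le _ _) ?_
      have := Finset.card_union_le ones manys
      omega
    have huniv30 : (Finset.univ : Finset (Fin 30)).card = 30 := by simp
    have huncovcard : 5 ≤ uncov.card := by
      rw [hcovered] at hcovcard
      rw [huncov]
      omega
    refine build hAcard huncovcard ?_
    intro z hz y hy
    simp only [huncov, Finset.mem_filter, Finset.mem_univ, true_and, not_exists] at hy
    intro hzy
    exact absurd hzy (by push_neg at hy; exact hy z hz)
end

section
/- Let G be a subgraph of the complete bipartite graph K_{7,30} with parts X (of size 7) and Y (of size 30) such that G contains no copy of K_{2,2} and Δ(G_X) = 7, and let B = {x ∈ X : deg_G(x) = 7}. If there exist three pairwise distinct vertices x, x', x'' ∈ B whose neighborhoods in Y have a common vertex, then the bipartite complement of G contains a copy of K_{5,5}. -/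
open Finset

lemma card5' {α : Type*} [DecidableEq α] (a b c d e : α)
    (h1 : a ≠ b) (h2 : a ≠ c) (h3 : a ≠ d) (h4 : a ≠ e)
    (h5 : b ≠ c) (h6 : b ≠ d) (h7 : b ≠ e)
    (h8 : c ≠ d) (h9 : c ≠ e) (h10 : d ≠ e) :
    ({a, b, c, d, e} : Finset α).card = 5 := by
  rw [Finset.card_insert_of_notMem (by simp [h1, h2, h3, h4]),
      Finset.card_insert_of_notMem (by simp [h5, h6, h7]),
      Finset.card_insert_of_notMem (by simp [h8, h9]),
      Finset.card_insert_of_notMem (by simp [h10]),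
      Finset.card_singleton]

lemma build5 (E : Finset (Fin 7 × Fin 30)) (A : Finset (Fin 7)) (hA : A.card = 5)
    (Bad : Finset (Fin 30)) (hBad : Bad.card ≤ 25)
    (hsub : ∀ a ∈ A, bNbhd E a ⊆ Bad) :
    bContains 5 5 (bCompl E) := by
  have h5 : 5 ≤ (Finset.univ \ Bad).card := by
    rw [Finset.card_sdiff_of_subset (Finset.subset_univ _)]
    have : (Finset.univ : Finset (Fin 30)).card = 30 := by simp
    omega
  obtain ⟨B, hBs, hBc⟩ := Finset.exists_subset_card_eq h5
  refine ⟨A, B, hA, hBc, ?_⟩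
  intro a ha b hb
  have hbB := hBs hb
  rw [Finset.mem_sdiff] at hbB
  simp only [bCompl, Finset.mem_sdiff, Finset.mem_univ, true_and]
  intro hmem
  exact hbB.2 (hsub a ha (by simp [bNbhd, hmem]))

set_option maxHeartbeats 2000000 in
lemma key_lemma {α : Type*} [DecidableEq α] (S₁ S₂ S₃ S₄ : Finset α)
    (hU : (S₁ ∪ S₂ ∪ S₃ ∪ S₄).card ≤ 11)
    (h12 : (S₁ ∩ S₂).card ≤ 1) (h13 : (S₁ ∩ S₃).card ≤ 1)
    (h14 : (S₁ ∩ S₄).card ≤ 1) (h23 : (S₂ ∩ S₃).card ≤ 1)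
    (h24 : (S₂ ∩ S₄).card ≤ 1) (h34 : (S₃ ∩ S₄).card ≤ 1) :
    ((S₁ ∪ S₂).card ≤ 6 ∨ (S₁ ∪ S₃).card ≤ 6 ∨ (S₁ ∪ S₄).card ≤ 6 ∨
     (S₂ ∪ S₃).card ≤ 6 ∨ (S₂ ∪ S₄).card ≤ 6 ∨ (S₃ ∪ S₄).card ≤ 6) ∨
    ((S₁ ∪ S₂ ∪ S₃).card ≤ 9 ∨ (S₁ ∪ S₂ ∪ S₄).card ≤ 9 ∨
     (S₁ ∪ S₃ ∪ S₄).card ≤ 9 ∨ (S₂ ∪ S₃ ∪ S₄).card ≤ 9) := by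
  by_contra hcon
  simp only [not_or, not_le] at hcon
  obtain ⟨⟨p12, p13, p14, p23, p24, p34⟩, q123, q124, q134, q234⟩ := hcon
  -- pair identities
  have e12 := Finset.card_union_add_card_inter S₁ S₂
  have e13 := Finset.card_union_add_card_inter S₁ S₃
  have e14 := Finset.card_union_add_card_inter S₁ S₄
  have e23 := Finset.card_union_add_card_inter S₂ S₃
  have e24 := Finset.card_union_add_card_inter S₂ S₄
  have e34 := Finset.card_union_add_card_inter S₃ S₄
  -- triple 123
  have e123a := Finset.card_union_add_card_inter (S₁ ∪ S₂) S₃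
  have r123 : (S₁ ∪ S₂) ∩ S₃ = (S₁ ∩ S₃) ∪ (S₂ ∩ S₃) := by
    ext a; simp only [Finset.mem_inter, Finset.mem_union]; tauto
  rw [r123] at e123a
  have e123b := Finset.card_union_add_card_inter (S₁ ∩ S₃) (S₂ ∩ S₃)
  have r123b : (S₁ ∩ S₃) ∩ (S₂ ∩ S₃) = S₁ ∩ S₂ ∩ S₃ := by
    ext a; simp only [Finset.mem_inter]; tauto
  rw [r123b] at e123b
  -- triple 124
  have e124a := Finset.card_union_add_card_inter (S₁ ∪ S₂) S₄
  have r124 : (S₁ ∪ S₂) ∩ S₄ = (S₁ ∩ S₄) ∪ (S₂ ∩ S₄) := by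
    ext a; simp only [Finset.mem_inter, Finset.mem_union]; tauto
  rw [r124] at e124a
  have e124b := Finset.card_union_add_card_inter (S₁ ∩ S₄) (S₂ ∩ S₄)
  have r124b : (S₁ ∩ S₄) ∩ (S₂ ∩ S₄) = S₁ ∩ S₂ ∩ S₄ := by
    ext a; simp only [Finset.mem_inter]; tauto
  rw [r124b] at e124b
  -- triple 134
  have e134a := Finset.card_union_add_card_inter (S₁ ∪ S₃) S₄
  have r134 : (S₁ ∪ S₃) ∩ S₄ = (S₁ ∩ S₄) ∪ (S₃ ∩ S₄) := by
    ext a; simp only [Finset.mem_inter, Finset.mem_union]; tauto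
  rw [r134] at e134a
  have e134b := Finset.card_union_add_card_inter (S₁ ∩ S₄) (S₃ ∩ S₄)
  have r134b : (S₁ ∩ S₄) ∩ (S₃ ∩ S₄) = S₁ ∩ S₃ ∩ S₄ := by
    ext a; simp only [Finset.mem_inter]; tauto
  rw [r134b] at e134b
  -- triple 234
  have e234a := Finset.card_union_add_card_inter (S₂ ∪ S₃) S₄
  have r234 : (S₂ ∪ S₃) ∩ S₄ = (S₂ ∩ S₄) ∪ (S₃ ∩ S₄) := by
    ext a; simp only [Finset.mem_inter, Finset.mem_union]; tauto
  rw [r234] at e234a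
  have e234b := Finset.card_union_add_card_inter (S₂ ∩ S₄) (S₃ ∩ S₄)
  have r234b : (S₂ ∩ S₄) ∩ (S₃ ∩ S₄) = S₂ ∩ S₃ ∩ S₄ := by
    ext a; simp only [Finset.mem_inter]; tauto
  rw [r234b] at e234b
  -- quadruple
  have e4a := Finset.card_union_add_card_inter (S₁ ∪ S₂ ∪ S₃) S₄
  have r4 : (S₁ ∪ S₂ ∪ S₃) ∩ S₄ = (S₁ ∩ S₄) ∪ (S₂ ∩ S₄) ∪ (S₃ ∩ S₄) := by
    ext a; simp only [Finset.mem_inter, Finset.mem_union]; tauto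
  rw [r4] at e4a
  have e4b := Finset.card_union_add_card_inter ((S₁ ∩ S₄) ∪ (S₂ ∩ S₄)) (S₃ ∩ S₄)
  have r4b : ((S₁ ∩ S₄) ∪ (S₂ ∩ S₄)) ∩ (S₃ ∩ S₄) = (S₁ ∩ S₃ ∩ S₄) ∪ (S₂ ∩ S₃ ∩ S₄) := by
    ext a; simp only [Finset.mem_inter, Finset.mem_union]; tauto
  rw [r4b] at e4b
  have e4d := Finset.card_union_add_card_inter (S₁ ∩ S₃ ∩ S₄) (S₂ ∩ S₃ ∩ S₄)
  have r4d : (S₁ ∩ S₃ ∩ S₄) ∩ (S₂ ∩ S₃ ∩ S₄) = S₁ ∩ S₂ ∩ S₃ ∩ S₄ := by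
    ext a; simp only [Finset.mem_inter]; tauto
  rw [r4d] at e4d
  -- triple-intersection bounds
  have t123a : (S₁ ∩ S₂ ∩ S₃).card ≤ (S₁ ∩ S₂).card :=
    Finset.card_le_card (by intro a ha; simp only [Finset.mem_inter] at *; tauto)
  have t123b : (S₁ ∩ S₂ ∩ S₃).card ≤ (S₁ ∩ S₃).card :=
    Finset.card_le_card (by intro a ha; simp only [Finset.mem_inter] at *; tauto)
  have t123c : (S₁ ∩ S₂ ∩ S₃).card ≤ (S₂ ∩ S₃).card :=
    Finset.card_le_card (by intro a ha; simp only [Finset.mem_inter] at *; tauto)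
  have t124a : (S₁ ∩ S₂ ∩ S₄).card ≤ (S₁ ∩ S₂).card :=
    Finset.card_le_card (by intro a ha; simp only [Finset.mem_inter] at *; tauto)
  have t124b : (S₁ ∩ S₂ ∩ S₄).card ≤ (S₁ ∩ S₄).card :=
    Finset.card_le_card (by intro a ha; simp only [Finset.mem_inter] at *; tauto)
  have t124c : (S₁ ∩ S₂ ∩ S₄).card ≤ (S₂ ∩ S₄).card :=
    Finset.card_le_card (by intro a ha; simp only [Finset.mem_inter] at *; tauto)
  have t134a : (S₁ ∩ S₃ ∩ S₄).card ≤ (S₁ ∩ S₃).card :=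
    Finset.card_le_card (by intro a ha; simp only [Finset.mem_inter] at *; tauto)
  have t134b : (S₁ ∩ S₃ ∩ S₄).card ≤ (S₁ ∩ S₄).card :=
    Finset.card_le_card (by intro a ha; simp only [Finset.mem_inter] at *; tauto)
  have t134c : (S₁ ∩ S₃ ∩ S₄).card ≤ (S₃ ∩ S₄).card :=
    Finset.card_le_card (by intro a ha; simp only [Finset.mem_inter] at *; tauto)
  have t234a : (S₂ ∩ S₃ ∩ S₄).card ≤ (S₂ ∩ S₃).card :=
    Finset.card_le_card (by intro a ha; simp only [Finset.mem_inter] at *; tauto)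
  have t234b : (S₂ ∩ S₃ ∩ S₄).card ≤ (S₂ ∩ S₄).card :=
    Finset.card_le_card (by intro a ha; simp only [Finset.mem_inter] at *; tauto)
  have t234c : (S₂ ∩ S₃ ∩ S₄).card ≤ (S₃ ∩ S₄).card :=
    Finset.card_le_card (by intro a ha; simp only [Finset.mem_inter] at *; tauto)
  have qa : (S₁ ∩ S₂ ∩ S₃ ∩ S₄).card ≤ (S₁ ∩ S₂ ∩ S₃).card :=
    Finset.card_le_card (by intro a ha; simp only [Finset.mem_inter] at *; tauto)
  have qb : (S₁ ∩ S₂ ∩ S₃ ∩ S₄).card ≤ (S₁ ∩ S₂ ∩ S₄).card :=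
    Finset.card_le_card (by intro a ha; simp only [Finset.mem_inter] at *; tauto)
  have qc : (S₁ ∩ S₂ ∩ S₃ ∩ S₄).card ≤ (S₁ ∩ S₃ ∩ S₄).card :=
    Finset.card_le_card (by intro a ha; simp only [Finset.mem_inter] at *; tauto)
  have qd : (S₁ ∩ S₂ ∩ S₃ ∩ S₄).card ≤ (S₂ ∩ S₃ ∩ S₄).card :=
    Finset.card_le_card (by intro a ha; simp only [Finset.mem_inter] at *; tauto)
  omega

set_option maxHeartbeats 1000000 in
lemma pair_case (E : Finset (Fin 7 × Fin 30)) (x x' x'' zi zj : Fin 7)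
    (h1 : x ≠ x') (h2 : x ≠ x'') (h3 : x ≠ zi) (h4 : x ≠ zj)
    (h5 : x' ≠ x'') (h6 : x' ≠ zi) (h7 : x' ≠ zj)
    (h8 : x'' ≠ zi) (h9 : x'' ≠ zj) (h10 : zi ≠ zj)
    (hU : (bNbhd E x ∪ bNbhd E x' ∪ bNbhd E x'').card ≤ 19)
    (hS : ((bNbhd E zi \ (bNbhd E x ∪ bNbhd E x' ∪ bNbhd E x'')) ∪
           (bNbhd E zj \ (bNbhd E x ∪ bNbhd E x' ∪ bNbhd E x''))).card ≤ 6) :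
    bContains 5 5 (bCompl E) := by
  refine build5 E {x, x', x'', zi, zj}
    (card5' x x' x'' zi zj h1 h2 h3 h4 h5 h6 h7 h8 h9 h10)
    ((bNbhd E x ∪ bNbhd E x' ∪ bNbhd E x'') ∪
      ((bNbhd E zi \ (bNbhd E x ∪ bNbhd E x' ∪ bNbhd E x'')) ∪
       (bNbhd E zj \ (bNbhd E x ∪ bNbhd E x' ∪ bNbhd E x'')))) ?_ ?_
  · calc _ ≤ (bNbhd E x ∪ bNbhd E x' ∪ bNbhd E x'').card +
        ((bNbhd E zi \ (bNbhd E x ∪ bNbhd E x' ∪ bNbhd E x'')) ∪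
         (bNbhd E zj \ (bNbhd E x ∪ bNbhd E x' ∪ bNbhd E x''))).card :=
          Finset.card_union_le _ _
      _ ≤ 25 := by omega
  · intro a ha w hw
    simp only [Finset.mem_insert, Finset.mem_singleton] at ha
    simp only [Finset.mem_union, Finset.mem_sdiff, Finset.mem_union]
    rcases ha with rfl | rfl | rfl | rfl | rfl <;> tauto
  
set_option maxHeartbeats 2000000 in
lemma triple_case (E : Finset (Fin 7 × Fin 30)) (x x' x'' zi zj zk : Fin 7)
    (h1 : x ≠ x') (h3 : x ≠ zi) (h4 : x ≠ zj) (h4' : x ≠ zk)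
    (h6 : x' ≠ zi) (h7 : x' ≠ zj) (h7' : x' ≠ zk)
    (h10 : zi ≠ zj) (h11 : zi ≠ zk) (h12 : zj ≠ zk)
    (h13 : (bNbhd E x ∪ bNbhd E x').card ≤ 13)
    (hS : (((bNbhd E zi \ (bNbhd E x ∪ bNbhd E x' ∪ bNbhd E x'')) ∪
            (bNbhd E zj \ (bNbhd E x ∪ bNbhd E x' ∪ bNbhd E x''))) ∪
           (bNbhd E zk \ (bNbhd E x ∪ bNbhd E x' ∪ bNbhd E x''))).card ≤ 9)
    (hpi : (bNbhd E zi ∩ bNbhd E x'').card ≤ 1)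
    (hpj : (bNbhd E zj ∩ bNbhd E x'').card ≤ 1)
    (hpk : (bNbhd E zk ∩ bNbhd E x'').card ≤ 1) :
    bContains 5 5 (bCompl E) := by
  refine build5 E {x, x', zi, zj, zk}
    (card5' x x' zi zj zk h1 h3 h4 h4' h6 h7 h7' h10 h11 h12)
    ((bNbhd E x ∪ bNbhd E x') ∪
      ((((bNbhd E zi \ (bNbhd E x ∪ bNbhd E x' ∪ bNbhd E x'')) ∪
         (bNbhd E zj \ (bNbhd E x ∪ bNbhd E x' ∪ bNbhd E x''))) ∪
        (bNbhd E zk \ (bNbhd E x ∪ bNbhd E x' ∪ bNbhd E x''))) ∪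
       ((bNbhd E zi ∩ bNbhd E x'') ∪ (bNbhd E zj ∩ bNbhd E x'') ∪
        (bNbhd E zk ∩ bNbhd E x'')))) ?_ ?_
  · calc _ ≤ (bNbhd E x ∪ bNbhd E x').card +
        (((((bNbhd E zi \ (bNbhd E x ∪ bNbhd E x' ∪ bNbhd E x'')) ∪
         (bNbhd E zj \ (bNbhd E x ∪ bNbhd E x' ∪ bNbhd E x''))) ∪
        (bNbhd E zk \ (bNbhd E x ∪ bNbhd E x' ∪ bNbhd E x''))) ∪
       ((bNbhd E zi ∩ bNbhd E x'') ∪ (bNbhd E zj ∩ bNbhd E x'') ∪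
        (bNbhd E zk ∩ bNbhd E x'')))).card := Finset.card_union_le _ _
      _ ≤ 25 := by
          have h1' := Finset.card_union_le
            ((((bNbhd E zi \ (bNbhd E x ∪ bNbhd E x' ∪ bNbhd E x'')) ∪
               (bNbhd E zj \ (bNbhd E x ∪ bNbhd E x' ∪ bNbhd E x''))) ∪
              (bNbhd E zk \ (bNbhd E x ∪ bNbhd E x' ∪ bNbhd E x''))))
            ((bNbhd E zi ∩ bNbhd E x'') ∪ (bNbhd E zj ∩ bNbhd E x'') ∪
             (bNbhd E zk ∩ bNbhd E x''))
          have h2' := Finset.card_union_le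
            ((bNbhd E zi ∩ bNbhd E x'') ∪ (bNbhd E zj ∩ bNbhd E x''))
            (bNbhd E zk ∩ bNbhd E x'')
          have h3' := Finset.card_union_le (bNbhd E zi ∩ bNbhd E x'')
            (bNbhd E zj ∩ bNbhd E x'')
          omega
  · intro a ha w hw
    simp only [Finset.mem_insert, Finset.mem_singleton] at ha
    simp only [Finset.mem_union, Finset.mem_sdiff, Finset.mem_inter, Finset.mem_union]
    rcases ha with rfl | rfl | rfl | rfl | rfl <;> tauto

set_option maxHeartbeats 2000000 in
theorem stmt_18 (E : Finset (Fin 7 × Fin 30))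
    (hK : ¬ bContains 2 2 E) (hΔ : bMaxDegX E = 7)
    (h : ∃ x x' x'' : Fin 7, x ≠ x' ∧ x ≠ x'' ∧ x' ≠ x'' ∧
      bDeg E x = 7 ∧ bDeg E x' = 7 ∧ bDeg E x'' = 7 ∧
      ∃ y : Fin 30, y ∈ bNbhd E x ∧ y ∈ bNbhd E x' ∧ y ∈ bNbhd E x'') :
    bContains 5 5 (bCompl E) := by
  classical
  obtain ⟨x, x', x'', hxx', hxx'', hx'x'', hdx, hdx', hdx'', y, hy, hy', hy''⟩ := h
  have dx : (bNbhd E x).card = 7 := hdx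
  have dx' : (bNbhd E x').card = 7 := hdx'
  have dx'' : (bNbhd E x'').card = 7 := hdx''
  -- K_{2,2}-freeness: pairwise neighborhood intersections have at most one element
  have pr : ∀ a b : Fin 7, a ≠ b → (bNbhd E a ∩ bNbhd E b).card ≤ 1 := by
    intro a b hab
    by_contra hc
    push_neg at hc
    rw [Finset.one_lt_card] at hc
    obtain ⟨y₁, hy₁, y₂, hy₂, hyne⟩ := hc
    rw [Finset.mem_inter] at hy₁ hy₂
    refine hK ⟨{a, b}, {y₁, y₂}, ?_, ?_, ?_⟩
    · rw [Finset.card_insert_of_notMem (by simp [hab]), Finset.card_singleton]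
    · rw [Finset.card_insert_of_notMem (by simp [hyne]), Finset.card_singleton]
    · intro u hu v hv
      simp only [Finset.mem_insert, Finset.mem_singleton] at hu hv
      have m1 : (a, y₁) ∈ E := by have := hy₁.1; simpa [bNbhd] using this
      have m2 : (b, y₁) ∈ E := by have := hy₁.2; simpa [bNbhd] using this
      have m3 : (a, y₂) ∈ E := by have := hy₂.1; simpa [bNbhd] using this
      have m4 : (b, y₂) ∈ E := by have := hy₂.2; simpa [bNbhd] using this
      rcases hu with rfl | rfl <;> rcases hv with rfl | rfl <;> assumption
  -- the three pairwise intersections are exactly {y}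
  have sing : ∀ a b : Fin 7, a ≠ b → y ∈ bNbhd E a → y ∈ bNbhd E b →
      bNbhd E a ∩ bNbhd E b = {y} := by
    intro a b hab ha hb
    refine (Finset.eq_of_subset_of_card_le (Finset.singleton_subset_iff.mpr (Finset.mem_inter.mpr ⟨ha, hb⟩)) (by simpa using pr a b hab)).symm
  have i12 := sing x x' hxx' hy hy'
  have i13 := sing x x'' hxx'' hy hy''
  have i23 := sing x' x'' hx'x'' hy' hy''
  -- |N x ∪ N x'| = 13
  have e12 := Finset.card_union_add_card_inter (bNbhd E x) (bNbhd E x')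
  rw [i12, Finset.card_singleton, dx, dx'] at e12
  have c12 : (bNbhd E x ∪ bNbhd E x').card = 13 := by omega
  -- |U| = 19
  have iU : (bNbhd E x ∪ bNbhd E x') ∩ bNbhd E x'' = {y} := by
    rw [Finset.union_inter_distrib_right, i13, i23, Finset.union_self]
  have eU := Finset.card_union_add_card_inter (bNbhd E x ∪ bNbhd E x') (bNbhd E x'')
  rw [iU, Finset.card_singleton, c12, dx''] at eU
  have cU : (bNbhd E x ∪ bNbhd E x' ∪ bNbhd E x'').card = 19 := by omega
  -- extract the four other vertices
  have hz3 : ({x, x', x''} : Finset (Fin 7)).card = 3 := by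
    rw [Finset.card_insert_of_notMem (by simp [hxx', hxx'']),
        Finset.card_insert_of_notMem (by simp [hx'x'']), Finset.card_singleton]
  have hZ : (Finset.univ \ ({x, x', x''} : Finset (Fin 7))).card = 3 + 1 := by
    rw [Finset.card_sdiff_of_subset (Finset.subset_univ _), hz3]
    simp
  obtain ⟨z₁, t₁, hm₁, hins₁, hct₁⟩ := Finset.card_eq_succ.mp hZ
  obtain ⟨z₂, t₂, hm₂, hins₂, hct₂⟩ := Finset.card_eq_succ.mp (show t₁.card = 2 + 1 from hct₁)
  obtain ⟨z₃, t₃, hm₃, hins₃, hct₃⟩ := Finset.card_eq_succ.mp (show t₂.card = 1 + 1 from hct₂)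
  obtain ⟨z₄, t₄, hm₄, hins₄, hct₄⟩ := Finset.card_eq_succ.mp (show t₃.card = 0 + 1 from hct₃)
  have mz₂t : z₂ ∈ t₁ := by rw [← hins₂]; exact Finset.mem_insert_self _ _
  have mz₃t : z₃ ∈ t₂ := by rw [← hins₃]; exact Finset.mem_insert_self _ _
  have mz₄t : z₄ ∈ t₃ := by rw [← hins₄]; exact Finset.mem_insert_self _ _
  have ht₂₁ : t₂ ⊆ t₁ := by rw [← hins₂]; exact Finset.subset_insert _ _
  have ht₃₂ : t₃ ⊆ t₂ := by rw [← hins₃]; exact Finset.subset_insert _ _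
  have mz₃t₁ : z₃ ∈ t₁ := ht₂₁ mz₃t
  have mz₄t₂ : z₄ ∈ t₂ := ht₃₂ mz₄t
  have mz₄t₁ : z₄ ∈ t₁ := ht₂₁ mz₄t₂
  have M₁ : z₁ ∈ Finset.univ \ ({x, x', x''} : Finset (Fin 7)) := by
    rw [← hins₁]; exact Finset.mem_insert_self _ _
  have M₂ : z₂ ∈ Finset.univ \ ({x, x', x''} : Finset (Fin 7)) := by
    rw [← hins₁]; exact Finset.mem_insert_of_mem mz₂t
  have M₃ : z₃ ∈ Finset.univ \ ({x, x', x''} : Finset (Fin 7)) := by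
    rw [← hins₁]; exact Finset.mem_insert_of_mem mz₃t₁
  have M₄ : z₄ ∈ Finset.univ \ ({x, x', x''} : Finset (Fin 7)) := by
    rw [← hins₁]; exact Finset.mem_insert_of_mem mz₄t₁
  have hz12 : z₁ ≠ z₂ := fun hh => hm₁ (hh ▸ mz₂t)
  have hz13 : z₁ ≠ z₃ := fun hh => hm₁ (hh ▸ mz₃t₁)
  have hz14 : z₁ ≠ z₄ := fun hh => hm₁ (hh ▸ mz₄t₁)
  have hz23 : z₂ ≠ z₃ := fun hh => hm₂ (hh ▸ mz₃t)
  have hz24 : z₂ ≠ z₄ := fun hh => hm₂ (hh ▸ mz₄t₂)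
  have hz34 : z₃ ≠ z₄ := fun hh => hm₃ (hh ▸ mz₄t)
  have nxs : ∀ z : Fin 7, z ∈ Finset.univ \ ({x, x', x''} : Finset (Fin 7)) →
      z ≠ x ∧ z ≠ x' ∧ z ≠ x'' := by
    intro z hz
    rw [Finset.mem_sdiff] at hz
    have := hz.2
    simp only [Finset.mem_insert, Finset.mem_singleton, not_or] at this
    exact this
  obtain ⟨n1x, n1x', n1x''⟩ := nxs z₁ M₁
  obtain ⟨n2x, n2x', n2x''⟩ := nxs z₂ M₂
  obtain ⟨n3x, n3x', n3x''⟩ := nxs z₃ M₃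
  obtain ⟨n4x, n4x', n4x''⟩ := nxs z₄ M₄
  -- the residual sets
  set U : Finset (Fin 30) := bNbhd E x ∪ bNbhd E x' ∪ bNbhd E x'' with hUdef
  have hSU : ∀ z : Fin 7, (bNbhd E z \ U) ⊆ Finset.univ \ U := by
    intro z w hw
    rw [Finset.mem_sdiff] at hw ⊢
    exact ⟨Finset.mem_univ _, hw.2⟩
  have hWc : (Finset.univ \ U).card = 11 := by
    rw [Finset.card_sdiff_of_subset (Finset.subset_univ _), cU]
    simp
  have hUnion : ((bNbhd E z₁ \ U) ∪ (bNbhd E z₂ \ U) ∪ (bNbhd E z₃ \ U) ∪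
      (bNbhd E z₄ \ U)).card ≤ 11 := by
    rw [← hWc]
    apply Finset.card_le_card
    intro w hw
    simp only [Finset.mem_union] at hw
    rcases hw with ((hw | hw) | hw) | hw
    · exact hSU z₁ hw
    · exact hSU z₂ hw
    · exact hSU z₃ hw
    · exact hSU z₄ hw
  have hSint : ∀ a b : Fin 7, a ≠ b →
      ((bNbhd E a \ U) ∩ (bNbhd E b \ U)).card ≤ 1 := by
    intro a b hab
    refine le_trans (Finset.card_le_card ?_) (pr a b hab)
    intro w hw
    simp only [Finset.mem_inter, Finset.mem_sdiff] at hw ⊢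
    exact ⟨hw.1.1, hw.2.1⟩
  have key := key_lemma (bNbhd E z₁ \ U) (bNbhd E z₂ \ U) (bNbhd E z₃ \ U)
    (bNbhd E z₄ \ U) hUnion (hSint _ _ hz12) (hSint _ _ hz13) (hSint _ _ hz14)
    (hSint _ _ hz23) (hSint _ _ hz24) (hSint _ _ hz34)
  have cU' : U.card ≤ 19 := le_of_eq cU
  have c12' : (bNbhd E x ∪ bNbhd E x').card ≤ 13 := le_of_eq c12
  rcases key with (hp | hp | hp | hp | hp | hp) | (hp | hp | hp | hp)
  · exact pair_case E x x' x'' z₁ z₂ hxx' hxx'' n1x.symm n2x.symm hx'x''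
      n1x'.symm n2x'.symm n1x''.symm n2x''.symm hz12 cU' hp
  · exact pair_case E x x' x'' z₁ z₃ hxx' hxx'' n1x.symm n3x.symm hx'x''
      n1x'.symm n3x'.symm n1x''.symm n3x''.symm hz13 cU' hp
  · exact pair_case E x x' x'' z₁ z₄ hxx' hxx'' n1x.symm n4x.symm hx'x''
      n1x'.symm n4x'.symm n1x''.symm n4x''.symm hz14 cU' hp
  · exact pair_case E x x' x'' z₂ z₃ hxx' hxx'' n2x.symm n3x.symm hx'x''
      n2x'.symm n3x'.symm n2x''.symm n3x''.symm hz23 cU' hp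
  · exact pair_case E x x' x'' z₂ z₄ hxx' hxx'' n2x.symm n4x.symm hx'x''
      n2x'.symm n4x'.symm n2x''.symm n4x''.symm hz24 cU' hp
  · exact pair_case E x x' x'' z₃ z₄ hxx' hxx'' n3x.symm n4x.symm hx'x''
      n3x'.symm n4x'.symm n3x''.symm n4x''.symm hz34 cU' hp
  · exact triple_case E x x' x'' z₁ z₂ z₃ hxx' n1x.symm n2x.symm n3x.symm
      n1x'.symm n2x'.symm n3x'.symm hz12 hz13 hz23 c12' hp
      (pr _ _ n1x'') (pr _ _ n2x'') (pr _ _ n3x'')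
  · exact triple_case E x x' x'' z₁ z₂ z₄ hxx' n1x.symm n2x.symm n4x.symm
      n1x'.symm n2x'.symm n4x'.symm hz12 hz14 hz24 c12' hp
      (pr _ _ n1x'') (pr _ _ n2x'') (pr _ _ n4x'')
  · exact triple_case E x x' x'' z₁ z₃ z₄ hxx' n1x.symm n3x.symm n4x.symm
      n1x'.symm n3x'.symm n4x'.symm hz13 hz14 hz34 c12' hp
      (pr _ _ n1x'') (pr _ _ n3x'') (pr _ _ n4x'')
  · exact triple_case E x x' x'' z₂ z₃ z₄ hxx' n2x.symm n3x.symm n4x.symm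
      n2x'.symm n3x'.symm n4x'.symm hz23 hz24 hz34 c12' hp
      (pr _ _ n2x'') (pr _ _ n3x'') (pr _ _ n4x'')
end

section
/- Let G be a subgraph of the complete bipartite graph K_{7,30} with parts X (of size 7) and Y (of size 30) such that G contains no copy of K_{2,2} and Δ(G_X) = 7, and let B = {x ∈ X : deg_G(x) = 7}. If |B| = 3 or |B| = 4, then the bipartite complement of G contains a copy of K_{5,5}. -/
open Finset

section General

variable {m n : ℕ} (E : Finset (Fin m × Fin n))

lemma bDeg_le_bMaxDegX (x : Fin m) : bDeg E x ≤ bMaxDegX E :=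
  le_sup (mem_univ x)

lemma sum_card_bColNbhd_eq_sum_bDeg : ∑ y, #(bColNbhd E y) = ∑ x, bDeg E x :=
  (sum_card_bipartiteAbove_eq_sum_card_bipartiteBelow (fun x y => (x, y) ∈ E)).symm

lemma bContains_bCompl_of_bColNbhd_subset {P : Finset (Fin m)} {T : Finset (Fin n)}
    (hT : ∀ y ∈ T, bColNbhd E y ⊆ P) : bContains (m - #P) #T (bCompl E) := by
  refine ⟨Pᶜ, T, by rw [card_compl, Fintype.card_fin], rfl, fun x hx y hy => ?_⟩
  simp only [bCompl, mem_sdiff, mem_univ, true_and]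
  intro hxy
  exact mem_compl.mp hx (hT y hy (by simpa [bColNbhd] using hxy))

end General

lemma eleven_le_card_pairs_superset_add_five_mul_card (S : Finset (Fin 7)) :
    11 ≤ #{P ∈ powersetCard 2 univ | S ⊆ P} + 5 * #S := by
  rcases le_or_gt #S 2 with hS | hS
  · rw [card_filter_powersetCard_subset S univ 2 (subset_univ S) hS, card_univ,
      Fintype.card_fin]
    interval_cases #S <;> decide
  · omega

lemma exists_pair_five_bColNbhd_subset (E : Finset (Fin 7 × Fin 30))
    (hdeg : ∀ x, bDeg E x ≤ 7) :
    ∃ P ∈ powersetCard 2 univ, 5 ≤ #{y | bColNbhd E y ⊆ P} := by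
  set Q : Finset (Finset (Fin 7)) := powersetCard 2 univ
  have hQ : #Q = 21 := by rw [card_powersetCard, card_univ, Fintype.card_fin]; rfl
  have hedges : ∑ y, #(bColNbhd E y) ≤ 49 := by
    rw [sum_card_bColNbhd_eq_sum_bDeg]
    calc ∑ x, bDeg E x ≤ ∑ _x : Fin 7, 7 := sum_le_sum fun x _ => hdeg x
      _ = 49 := by simp
  have hdouble : ∑ y, #{P ∈ Q | bColNbhd E y ⊆ P} = ∑ P ∈ Q, #{y | bColNbhd E y ⊆ P} :=
    sum_card_bipartiteAbove_eq_sum_card_bipartiteBelow (fun y P => bColNbhd E y ⊆ P)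
  have hweight : 330 ≤ ∑ P ∈ Q, #{y | bColNbhd E y ⊆ P} + 5 * ∑ y, #(bColNbhd E y) :=
    calc 330 = ∑ _y : Fin 30, 11 := by simp
      _ ≤ ∑ y, (#{P ∈ Q | bColNbhd E y ⊆ P} + 5 * #(bColNbhd E y)) :=
        sum_le_sum fun y _ => eleven_le_card_pairs_superset_add_five_mul_card _
      _ = _ := by rw [sum_add_distrib, mul_sum, hdouble]
  exact exists_lt_of_sum_lt (s := Q) (f := fun _ => 4) (g := fun P => #{y | bColNbhd E y ⊆ P})
    (by rw [sum_const, hQ, smul_eq_mul]; omega)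

theorem stmt_19_general (E : Finset (Fin 7 × Fin 30))
    (hΔ : bMaxDegX E = 7) :
    bContains 5 5 (bCompl E) := by
  obtain ⟨P, hP, hfive⟩ :=
    exists_pair_five_bColNbhd_subset E fun x => (bDeg_le_bMaxDegX E x).trans hΔ.le
  obtain ⟨T, hTsub, hT⟩ := exists_subset_card_eq hfive
  have h := bContains_bCompl_of_bColNbhd_subset E (P := P) (T := T)
    fun y hy => (mem_filter.mp (hTsub hy)).2
  rwa [(mem_powersetCard.mp hP).2, hT] at h

theorem stmt_19 (E : Finset (Fin 7 × Fin 30))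
    (hK : ¬ bContains 2 2 E) (hΔ : bMaxDegX E = 7)
    (hB : (Finset.univ.filter (fun x : Fin 7 => bDeg E x = 7)).card = 3 ∨
          (Finset.univ.filter (fun x : Fin 7 => bDeg E x = 7)).card = 4) :
    bContains 5 5 (bCompl E) :=
  stmt_19_general E hΔ
end
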